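/- arXiv:2510.24388 — 10 statements merged into one kernel-verified Lean document; each statement's English description precedes it below -/
import Mathlib

section
/- Characterization of the egalitarian surplus sharing operator (Theorem 3.1(1)): Let Φ : F → F be an efficient extension operator. Then Φ satisfies (ET) and (EES) and, for every f ∈ F, the solution Φ(f) satisfies (f-IES), if and only if for every f ∈ F, every v ∈ V and every i ∈ N, Φ_i(f)(v) = f_i(v) + (1/n)·(v(N) − Σ_{k∈N} f_k(v)). -/
/-!
Theorem 3.1(1): characterization of the egalitarian surplus sharing (ESS) operator.
-/

namespace Stmt0

/-- A TU-game on the player set `N`: a function on coalitions vanishing at `∅`. -/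
abbrev Game (N : Type*) := {v : Finset N → ℝ // v ∅ = 0}

/-- A solution assigns to each game a payoff vector. -/
abbrev Solution (N : Type*) := Game N → N → ℝ

variable {N : Type*} [Fintype N] [DecidableEq N]

/-- Efficiency (E). -/
def Efficient (φ : Solution N) : Prop :=
  ∀ v : Game N, ∑ i, φ v i = v.1 Finset.univ

/-- Equal treatment (ET) for an operator. -/
def ET (Φ : Solution N → Solution N) : Prop :=
  ∀ (f : Solution N) (i j : N), (∀ v, f v i = f v j) → ∀ v, Φ f v i = Φ f v j

/-- Equality for equal surplus (EES) for an operator. -/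
def EES (Φ : Solution N → Solution N) : Prop :=
  ∀ (f f' : Solution N) (v : Game N) (i : N),
    (∑ k, f v k) = (∑ k, f' v k) → f v i = f' v i → Φ f v i = Φ f' v i

/-- The `f`-individualistic property for equal surplus (`f`-IES). -/
def IES (f φ : Solution N) : Prop :=
  ∀ (v w : Game N) (i : N),
    v.1 Finset.univ - ∑ k, f v k = w.1 Finset.univ - ∑ k, f w k →
    f v i = f w i → φ v i = φ w i

/-- Theorem 3.1(1): an efficient extension operator satisfies (ET), (EES), and
`Φ(f)` satisfies (`f`-IES) for every `f`, iff `Φ` is the egalitarian surplus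
sharing operator. -/
theorem ess_operator_characterization [Nonempty N]
    (Φ : Solution N → Solution N)
    (hEff : ∀ f : Solution N, Efficient (Φ f)) :
    (ET Φ ∧ EES Φ ∧ ∀ f : Solution N, IES f (Φ f)) ↔
      (∀ (f : Solution N) (v : Game N) (i : N),
        Φ f v i = f v i + (1 / (Fintype.card N : ℝ)) * (v.1 Finset.univ - ∑ k, f v k)) := by
  have hnpos : (0:ℝ) < (Fintype.card N : ℝ) := by exact_mod_cast Fintype.card_pos
  have hnne : (Fintype.card N : ℝ) ≠ 0 := ne_of_gt hnpos
  constructor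
  · rintro ⟨hET, hEES, hIES⟩ f v i
    set n : ℝ := (Fintype.card N : ℝ) with hn
    set a : ℝ := f v i with ha
    set S : ℝ := ∑ k, f v k with hS
    set T : ℝ := v.1 Finset.univ with hT
    -- the constant solution
    set e : Solution N := fun _ _ => a with he
    have hsym : ∀ u : Game N, Φ e u i = u.1 Finset.univ / n := by
      intro u
      have h2 := hEff e u
      rw [Finset.sum_congr rfl (fun j _ => hET e j i (fun _ => rfl) u)] at h2
      rw [Finset.sum_const, Finset.card_univ, nsmul_eq_mul] at h2
      field_simp [hn] at h2 ⊢
      linarith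
    -- the auxiliary game w
    have hne : (Finset.univ : Finset N) ≠ ∅ := Finset.univ_nonempty.ne_empty
    set T' : ℝ := T - S + n * a with hT'
    set w : Game N := ⟨fun c => if c = Finset.univ then T' else 0, by
      simp [Ne.symm hne]⟩ with hw
    have hwN : w.1 Finset.univ = T' := by simp [hw]
    -- the auxiliary solution h
    set h : Solution N := fun u k => if u = v then f v k else a with hh
    have hhv : ∀ k, h v k = f v k := by intro k; simp [hh]
    have hhwi : h w i = a := by
      by_cases hwv : w = v
      · simp [hh, hwv, ha]
      · simp [hh, hwv]
    have hSav : w = v → S = n * a := by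
      intro hwv
      have : T' = T := by rw [← hwN, hwv]
      rw [hT'] at this; linarith
    have hsumhv : ∑ k, h v k = S := Finset.sum_congr rfl (fun k _ => hhv k)
    have hsumhw : ∑ k, h w k = n * a := by
      by_cases hwv : w = v
      · rw [hwv, hsumhv]; exact hSav hwv
      · have : ∀ k, h w k = a := by intro k; simp [hh, hwv]
        rw [Finset.sum_congr rfl (fun k _ => this k), Finset.sum_const,
          Finset.card_univ, nsmul_eq_mul, hn]
    have step1 : Φ f v i = Φ h v i :=
      hEES f h v i (by rw [hsumhv]) (hhv i).symm
    have step2 : Φ h v i = Φ h w i :=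
      hIES h v w i (by rw [hsumhv, hsumhw, hwN, hT', ← hT]; ring) (by rw [hhv i, hhwi])
    have step3 : Φ h w i = Φ e w i :=
      hEES h e w i
        (by rw [hsumhw, he]; simp [Finset.sum_const, Finset.card_univ, nsmul_eq_mul, hn])
        (by rw [hhwi])
    have step4 : Φ e w i = T' / n := by rw [hsym w, hwN]
    rw [step1, step2, step3, step4, hT']
    field_simp
    ring
  · intro hF
    refine ⟨?_, ?_, ?_⟩
    · intro f i j hij v
      rw [hF f v i, hF f v j, hij v]
    · intro f f' v i hsum hi
      rw [hF f v i, hF f' v i, hsum, hi]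
    · intro f v u i hsur hi
      rw [hF f v i, hF f u i, hsur, hi]

end Stmt0
end

section
/- Characterization of the proportional sharing operator (Theorem 3.1(2)): Let Φ be an operator assigning to each f ∈ F_+ a solution Φ(f) : V_+ → ℝ^N such that Σ_{i∈N} Φ_i(f)(v) = v(N) for every v ∈ V_+ (efficiency). Then Φ satisfies (ET) and (EES) and, for every f ∈ F_+, the solution Φ(f) satisfies (f-IER), if and only if for every f ∈ F_+, every v ∈ V_+ and every i ∈ N, Φ_i(f)(v) = (f_i(v)/Σ_{k∈N} f_k(v))·v(N). -/
/-!
By (EES), `Φᵢ(f)(v)` depends only on `fᵢ(v)` and `∑ₖ fₖ(v)`, so it suffices to treat solutions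
that prescribe the same payoff vector `x` in every game. For a symmetric such `x`, (ET) and
efficiency give `v(N)/n`. When `xⱼ > 0`, splice `x` at `v` with the symmetric vector of entries `xⱼ`
at another game `v'` of the same ratio `v'(N)/∑ₖ xⱼ = v(N)/∑ₖ xₖ` (with at least two players `v(N)` is
unconstrained on `V₊`): (`f`-IER) moves player `j` from `v` to `v'`, where the spliced solution
agrees with the symmetric one. A nonpositive `xⱼ` is reduced to this case by giving all other
players a common positive weight and appealing to efficiency.
-/

namespace Stmt1

/-- A TU-game on the player set `N`: a function on coalitions vanishing at `∅`. -/
abbrev Game (N : Type*) := {v : Finset N → ℝ // v ∅ = 0}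

variable (N : Type*) [Fintype N] [DecidableEq N]

/-- `V₊`: TU-games whose sum of individual worths is strictly positive. -/
abbrev GamePos := {v : Game N // 0 < ∑ k, v.1 {k}}

/-- `F₊`: positive solutions, i.e. maps on `V₊` whose payoffs always have a
strictly positive sum. -/
abbrev SolPos := {f : GamePos N → N → ℝ // ∀ v, 0 < ∑ k, f v k}

variable {N}

/-- Equal treatment (ET) for an operator on `F₊`. -/
def ET (Φ : SolPos N → GamePos N → N → ℝ) : Prop :=
  ∀ (f : SolPos N) (i j : N), (∀ v, f.1 v i = f.1 v j) → ∀ v, Φ f v i = Φ f v j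

/-- Equality for equal surplus (EES) for an operator on `F₊`. -/
def EES (Φ : SolPos N → GamePos N → N → ℝ) : Prop :=
  ∀ (f f' : SolPos N) (v : GamePos N) (i : N),
    (∑ k, f.1 v k) = (∑ k, f'.1 v k) → f.1 v i = f'.1 v i → Φ f v i = Φ f' v i

/-- The `f`-individualistic property for equal ratio (`f`-IER). -/
def IER (f : SolPos N) (φ : GamePos N → N → ℝ) : Prop :=
  ∀ (v w : GamePos N) (i : N),
    v.1.1 Finset.univ / (∑ k, f.1 v k) = w.1.1 Finset.univ / (∑ k, f.1 w k) →
    f.1 v i = f.1 w i → φ v i = φ w i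

section

variable {ι : Type*} [Fintype ι]

noncomputable def propShare (x : ι → ℝ) (t : ℝ) (i : ι) : ℝ := x i / (∑ k, x k) * t

lemma propShare_eq_mul_div (x : ι → ℝ) (t : ℝ) (i : ι) :
    propShare x t i = x i * (t / ∑ k, x k) := by
  unfold propShare; ring

lemma propShare_eq_of_ratio_eq {x y : ι → ℝ} {s t : ℝ} {i j : ι}
    (hst : s / ∑ k, x k = t / ∑ k, y k) (hij : x i = y j) :
    propShare x s i = propShare y t j := by
  rw [propShare_eq_mul_div, propShare_eq_mul_div, hst, hij]

lemma sum_propShare {x : ι → ℝ} (hx : ∑ k, x k ≠ 0) (t : ℝ) :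
    ∑ i, propShare x t i = t := by
  simp only [propShare, ← Finset.sum_mul, ← Finset.sum_div, div_self hx, one_mul]

lemma eq_propShare_of_forall_ne [DecidableEq ι] {φ x : ι → ℝ} {t : ℝ} (hφ : ∑ k, φ k = t)
    (hx : ∑ k, x k ≠ 0) {j : ι} (h : ∀ k ≠ j, φ k = propShare x t k) :
    φ j = propShare x t j := by
  have hrest : ∑ k ∈ Finset.univ.erase j, φ k = ∑ k ∈ Finset.univ.erase j, propShare x t k :=
    Finset.sum_congr rfl fun k hk => h k (Finset.ne_of_mem_erase hk)
  have hsum := hφ.trans (sum_propShare hx t).symm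
  rw [← Finset.add_sum_erase _ φ (Finset.mem_univ j),
    ← Finset.add_sum_erase _ _ (Finset.mem_univ j), hrest] at hsum
  exact add_right_cancel hsum

/-- The proportional sharing (PS) operator. -/
noncomputable def psOp (f : SolPos ι) (v : GamePos ι) : ι → ℝ :=
  propShare (f.1 v) (v.1.1 Finset.univ)

lemma psOp_ET : ET (psOp (ι := ι)) := by
  intro f i j hij v
  simp only [psOp, propShare, hij v]

lemma psOp_EES : EES (psOp (ι := ι)) := by
  intro f f' v i hsum hi
  simp only [psOp, propShare, hsum, hi]

lemma psOp_IER (f : SolPos ι) : IER f (psOp f) :=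
  fun _ _ _ hratio hi => propShare_eq_of_ratio_eq hratio hi

end

section

variable {ι : Type*}

def gameOfWorth (c t : ℝ) : Game ι :=
  ⟨fun A => if A.card ≤ 1 then c * A.card else t, by simp⟩

lemma gameOfWorth_singleton (c t : ℝ) (k : ι) : (gameOfWorth c t).1 {k} = c := by
  simp [gameOfWorth]

end

section

variable {ι : Type*} [Fintype ι]

lemma gameOfWorth_univ (hι : 1 < Fintype.card ι) (c t : ℝ) :
    (gameOfWorth (ι := ι) c t).1 Finset.univ = t := by
  simp [gameOfWorth, Finset.card_univ, hι.not_ge]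

lemma exists_gamePos_ne_worth_eq (hι : 1 < Fintype.card ι) (w : GamePos ι) (t : ℝ) :
    ∃ w' : GamePos ι, w' ≠ w ∧ w'.1.1 Finset.univ = t := by
  obtain ⟨k, -, -⟩ := Fintype.one_lt_card_iff.mp hι
  have hpos (c : ℝ) (hc : 0 < c) : 0 < ∑ k, (gameOfWorth c t : Game ι).1 {k} := by
    simp only [gameOfWorth_singleton, Finset.sum_const, Finset.card_univ, nsmul_eq_mul]
    have : 0 < Fintype.card ι := by omega
    positivity
  let g (c : ℝ) (hc : 0 < c) : GamePos ι := ⟨gameOfWorth c t, hpos c hc⟩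
  have hg : g 1 one_pos ≠ g 2 two_pos := fun h => by
    have := congrArg (fun v : GamePos ι => v.1.1 {k}) h
    norm_num [g, gameOfWorth_singleton] at this
  by_cases h1 : g 1 one_pos = w
  · exact ⟨g 2 two_pos, h1 ▸ hg.symm, gameOfWorth_univ hι 2 t⟩
  · exact ⟨g 1 one_pos, h1, gameOfWorth_univ hι 1 t⟩

def constSol (x : ι → ℝ) (hx : 0 < ∑ k, x k) : SolPos ι := ⟨fun _ => x, fun _ => hx⟩

open Classical in
noncomputable def SolPos.update (f : SolPos ι) (w : GamePos ι) (x : ι → ℝ)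
    (hx : 0 < ∑ k, x k) : SolPos ι :=
  ⟨Function.update f.1 w x, fun v => by
    rcases eq_or_ne v w with rfl | hv
    · simpa using hx
    · simpa [hv] using f.2 v⟩

lemma SolPos.update_apply_self (f : SolPos ι) (w : GamePos ι) (x : ι → ℝ)
    (hx : 0 < ∑ k, x k) : (f.update w x hx).1 w = x := by
  simp [SolPos.update]

lemma SolPos.update_apply_of_ne (f : SolPos ι) {v w : GamePos ι} (hvw : v ≠ w) (x : ι → ℝ)
    (hx : 0 < ∑ k, x k) : (f.update w x hx).1 v = f.1 v := by
  simp [SolPos.update, hvw]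

lemma propShare_const {s : ℝ} (hs : 0 < ∑ _k : ι, s) (t : ℝ) (j : ι) :
    propShare (fun _ => s) t j = t / Fintype.card ι := by
  rw [Finset.sum_const, Finset.card_univ, nsmul_eq_mul] at hs
  have hn : (Fintype.card ι : ℝ) ≠ 0 := by rintro h; simp [h] at hs
  have hs0 : s ≠ 0 := by rintro rfl; simp at hs
  simp only [propShare, Finset.sum_const, Finset.card_univ, nsmul_eq_mul]
  field_simp

def Efficient (Φ : SolPos ι → GamePos ι → ι → ℝ) : Prop :=
  ∀ (f : SolPos ι) (v : GamePos ι), ∑ i, Φ f v i = v.1.1 Finset.univ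

variable {Φ : SolPos ι → GamePos ι → ι → ℝ}

lemma apply_constSol_const (hET : ET Φ) (hEff : Efficient Φ) {s : ℝ} (hs : 0 < ∑ _k : ι, s)
    (w : GamePos ι) (j : ι) :
    Φ (constSol (fun _ => s) hs) w j = propShare (fun _ => s) (w.1.1 Finset.univ) j := by
  set g := constSol (fun _ => s) hs
  have hsum : ∑ k, Φ g w k = Fintype.card ι * Φ g w j := by
    rw [Finset.sum_congr rfl fun k _ => hET g k j (fun _ => rfl) w, Finset.sum_const,
      Finset.card_univ, nsmul_eq_mul]
  have hn : (Fintype.card ι : ℝ) ≠ 0 := by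
    rintro h; simp [Finset.sum_const, Finset.card_univ, h] at hs
  rw [propShare_const hs, eq_div_iff hn, mul_comm, ← hsum, hEff g w]

lemma apply_constSol_of_pos (hι : 1 < Fintype.card ι) (hET : ET Φ) (hEES : EES Φ)
    (hIER : ∀ f, IER f (Φ f)) (hEff : Efficient Φ) {x : ι → ℝ} (hx : 0 < ∑ k, x k)
    (w : GamePos ι) {j : ι} (hxj : 0 < x j) :
    Φ (constSol x hx) w j = propShare x (w.1.1 Finset.univ) j := by
  have hs : 0 < ∑ _k : ι, x j := by
    have : 0 < Fintype.card ι := by omega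
    simp only [Finset.sum_const, Finset.card_univ, nsmul_eq_mul]
    positivity
  set cs := constSol (fun _ => x j) hs
  obtain ⟨w', hw', hw't⟩ := exists_gamePos_ne_worth_eq hι w
    (w.1.1 Finset.univ / (∑ k, x k) * ∑ _k : ι, x j)
  have hratio : w.1.1 Finset.univ / ∑ k, x k = w'.1.1 Finset.univ / ∑ _k : ι, x j := by
    rw [hw't, mul_div_cancel_right₀ _ hs.ne']
  set mix := cs.update w x hx
  have hmix : mix.1 w = x := cs.update_apply_self w x hx
  have hmix' : mix.1 w' = cs.1 w' := cs.update_apply_of_ne hw' x hx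
  calc Φ (constSol x hx) w j = Φ mix w j := hEES _ _ w j (by rw [hmix]; rfl) (by rw [hmix]; rfl)
    _ = Φ mix w' j := hIER mix w w' j (by rwa [hmix, hmix']) (by rw [hmix, hmix']; rfl)
    _ = Φ cs w' j := hEES _ _ w' j (by rw [hmix']) (by rw [hmix'])
    _ = propShare (fun _ => x j) (w'.1.1 Finset.univ) j := apply_constSol_const hET hEff hs w' j
    _ = propShare x (w.1.1 Finset.univ) j := (propShare_eq_of_ratio_eq hratio rfl).symm

lemma apply_constSol [DecidableEq ι] (hι : 1 < Fintype.card ι) (hET : ET Φ) (hEES : EES Φ)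
    (hIER : ∀ f, IER f (Φ f)) (hEff : Efficient Φ) {x : ι → ℝ} (hx : 0 < ∑ k, x k)
    (w : GamePos ι) (j : ι) :
    Φ (constSol x hx) w j = propShare x (w.1.1 Finset.univ) j := by
  rcases lt_or_ge 0 (x j) with hxj | hxj
  · exact apply_constSol_of_pos hι hET hEES hIER hEff hx w hxj
  have hn : (0 : ℝ) < Fintype.card ι - 1 := by
    have : (1 : ℝ) < Fintype.card ι := by exact_mod_cast hι
    linarith
  set c := (∑ k, x k - x j) / (Fintype.card ι - 1) with hcdef
  have hc : 0 < c := div_pos (by linarith) hn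
  set y := Function.update (fun _ => c) j (x j)
  have hy : ∑ k, y k = ∑ k, x k := by
    rw [Finset.sum_update_of_mem (Finset.mem_univ j), Finset.sum_const, Finset.card_univ_sdiff,
      Finset.card_singleton, nsmul_eq_mul, Nat.cast_sub hι.le, Nat.cast_one, hcdef,
      mul_div_cancel₀ _ hn.ne']
    ring
  have hy0 : 0 < ∑ k, y k := hy ▸ hx
  calc Φ (constSol x hx) w j = Φ (constSol y hy0) w j :=
        hEES _ _ w j hy.symm (by simp [constSol, y])
    _ = propShare y (w.1.1 Finset.univ) j :=
        eq_propShare_of_forall_ne (hEff _ w) hy0.ne' fun k hk =>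
          apply_constSol_of_pos hι hET hEES hIER hEff hy0 w (by simpa [y, hk] using hc)
    _ = propShare x (w.1.1 Finset.univ) j :=
        propShare_eq_of_ratio_eq (by rw [hy]) (by simp [y])

end

theorem ps_operator_characterization_general
    (Φ : SolPos N → GamePos N → N → ℝ)
    (hEff : ∀ (f : SolPos N) (v : GamePos N), ∑ i, Φ f v i = v.1.1 Finset.univ) :
    (ET Φ ∧ EES Φ ∧ ∀ f : SolPos N, IER f (Φ f)) ↔
      (∀ (f : SolPos N) (v : GamePos N) (i : N),
        Φ f v i = (f.1 v i / ∑ k, f.1 v k) * v.1.1 Finset.univ) := by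
  constructor
  · rintro ⟨hET, hEES, hIER⟩ f v i
    rcases le_or_gt (Fintype.card N) 1 with hN | hN
    · have := Fintype.card_le_one_iff_subsingleton.mp hN
      exact eq_propShare_of_forall_ne (hEff f v) (f.2 v).ne' fun k hk =>
        absurd (Subsingleton.elim k i) hk
    · rw [hEES f (constSol (f.1 v) (f.2 v)) v i rfl rfl]
      exact apply_constSol hN hET hEES hIER hEff _ v i
  · intro hΦ
    obtain rfl : Φ = psOp := funext fun f => funext fun v => funext (hΦ f v)
    exact ⟨psOp_ET, psOp_EES, psOp_IER⟩

/-- Theorem 3.1(2): an efficient operator on `F₊` satisfies (ET), (EES), and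
`Φ(f)` satisfies (`f`-IER) for every `f ∈ F₊`, iff `Φ` is the proportional
sharing operator. -/
theorem ps_operator_characterization [Nonempty N]
    (Φ : SolPos N → GamePos N → N → ℝ)
    (hEff : ∀ (f : SolPos N) (v : GamePos N), ∑ i, Φ f v i = v.1.1 Finset.univ) :
    (ET Φ ∧ EES Φ ∧ ∀ f : SolPos N, IER f (Φ f)) ↔
      (∀ (f : SolPos N) (v : GamePos N) (i : N),
        Φ f v i = (f.1 v i / ∑ k, f.1 v k) * v.1.1 Finset.univ) :=
  ps_operator_characterization_general Φ hEff

end Stmt1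
end

section
/- Lemma C.1: Let f ∈ F_G and suppose a solution φ ∈ F_G satisfies (E) and (f-FDS). Then for every communication game (v,g) and every component C ∈ N/g, Σ_{i∈C} φ_i(v,g) = Σ_{i∈C} f_i(v,g) + (|C|/n)·(v(N) − Σ_{k∈N} f_k(v,g)). -/
/-
By (f-FDS) every component carries the same average surplus `c` over `f`. Summing, over all
players `i`, the average surplus of the component of `i` counts every player's surplus exactly
once, so `n * c` is the total surplus `v(N) - ∑ f`, which (E) pins down; the component `C`
then receives `|C| * c`.
-/

namespace Stmt2

/-- A TU-game on the player set `N`: a function on coalitions vanishing at `∅`. -/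
abbrev Game (N : Type*) := {v : Finset N → ℝ // v ∅ = 0}

/-- A solution for communication games. -/
abbrev GSolution (N : Type*) := Game N → SimpleGraph N → N → ℝ

variable {N : Type*} [Fintype N] [DecidableEq N]

/-- The component of `N/g` containing the player `i`. -/
noncomputable def comp (g : SimpleGraph N) (i : N) : Finset N :=
  (Set.toFinite {j | g.Reachable i j}).toFinset

/-- Efficiency (E). -/
def Efficient (φ : GSolution N) : Prop :=
  ∀ (v : Game N) (g : SimpleGraph N), ∑ i, φ v g i = v.1 Finset.univ

/-- `f`-fair distribution of the surplus (`f`-FDS): the average surplus relative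
to `f` is the same over every two components of the network. -/
def FDS (f φ : GSolution N) : Prop :=
  ∀ (v : Game N) (g : SimpleGraph N) (i j : N),
    (1 / ((comp g i).card : ℝ)) * ∑ k ∈ comp g i, (φ v g k - f v g k) =
      (1 / ((comp g j).card : ℝ)) * ∑ k ∈ comp g j, (φ v g k - f v g k)

section Components

omit [DecidableEq N]

variable {g : SimpleGraph N} {i j : N}

lemma mem_comp : j ∈ comp g i ↔ g.Reachable i j := by
  simp [comp]

lemma mem_comp_comm : j ∈ comp g i ↔ i ∈ comp g j := by
  simp only [mem_comp]
  exact ⟨.symm, .symm⟩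

lemma comp_eq_of_mem (h : j ∈ comp g i) : comp g j = comp g i := by
  ext k
  simp only [mem_comp] at h ⊢
  exact ⟨h.trans, h.symm.trans⟩

lemma card_comp_pos (g : SimpleGraph N) (i : N) : 0 < (comp g i).card :=
  Finset.card_pos.2 ⟨i, mem_comp.2 .rfl⟩

/-- (f-FDS) says, definitionally, that `compAvg g (fun k => φ v g k - f v g k)` is constant. -/
noncomputable def compAvg (g : SimpleGraph N) (x : N → ℝ) (i : N) : ℝ :=
  1 / ((comp g i).card : ℝ) * ∑ k ∈ comp g i, x k

lemma card_mul_compAvg (g : SimpleGraph N) (x : N → ℝ) (i : N) :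
    ((comp g i).card : ℝ) * compAvg g x i = ∑ k ∈ comp g i, x k := by
  have : ((comp g i).card : ℝ) ≠ 0 := by exact_mod_cast (card_comp_pos g i).ne'
  rw [compAvg, ← mul_assoc, mul_one_div_cancel this, one_mul]

lemma sum_compAvg (g : SimpleGraph N) (x : N → ℝ) : ∑ i, compAvg g x i = ∑ i, x i := calc
  ∑ i, compAvg g x i = ∑ i, ∑ k ∈ comp g i, x k / (comp g i).card := by
    simp only [compAvg, Finset.mul_sum, one_div, inv_mul_eq_div]
  _ = ∑ k, ∑ i ∈ comp g k, x k / (comp g i).card :=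
    Finset.sum_comm' fun i k => by simp [mem_comp_comm]
  _ = ∑ k, ∑ _i ∈ comp g k, x k / (comp g k).card :=
    Finset.sum_congr rfl fun k _ => Finset.sum_congr rfl fun i hi => by rw [comp_eq_of_mem hi]
  _ = ∑ k, x k := by
    refine Finset.sum_congr rfl fun k _ => ?_
    rw [Finset.sum_const, nsmul_eq_mul, mul_div_cancel₀]
    exact_mod_cast (card_comp_pos g k).ne'

end Components

theorem component_surplus_general (f φ : GSolution N)
    (hE : Efficient φ) (hFDS : FDS f φ) :
    ∀ (v : Game N) (g : SimpleGraph N) (i : N),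
      ∑ k ∈ comp g i, φ v g k =
        (∑ k ∈ comp g i, f v g k) +
          (((comp g i).card : ℝ) / (Fintype.card N : ℝ)) *
            (v.1 Finset.univ - ∑ k, f v g k) := by
  intro v g i
  set x : N → ℝ := fun k => φ v g k - f v g k
  have hn : (Fintype.card N : ℝ) ≠ 0 := by exact_mod_cast (Fintype.card_pos_iff.2 ⟨i⟩).ne'
  have htotal : (Fintype.card N : ℝ) * compAvg g x i = v.1 Finset.univ - ∑ k, f v g k := by
    rw [← hE v g, ← Finset.sum_sub_distrib, ← sum_compAvg g x, ← Finset.card_univ,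
      ← nsmul_eq_mul, ← Finset.sum_const]
    exact Finset.sum_congr rfl fun k _ => (hFDS v g k i).symm
  calc ∑ k ∈ comp g i, φ v g k = ∑ k ∈ comp g i, f v g k + ∑ k ∈ comp g i, x k := by
        simp [x, Finset.sum_sub_distrib]
    _ = _ := by
        rw [← card_mul_compAvg g x i, ← htotal]
        field_simp

/-- Lemma C.1. -/
theorem component_surplus [Nonempty N] (f φ : GSolution N)
    (hE : Efficient φ) (hFDS : FDS f φ) :
    ∀ (v : Game N) (g : SimpleGraph N) (i : N),
      ∑ k ∈ comp g i, φ v g k =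
        (∑ k ∈ comp g i, f v g k) +
          (((comp g i).card : ℝ) / (Fintype.card N : ℝ)) *
            (v.1 Finset.univ - ∑ k, f v g k) :=
  component_surplus_general f φ hE hFDS

end Stmt2
end

section
/- Characterization of the cohesive egalitarian surplus sharing operator (Corollary B.1(1)): Let Φ : F → F be a cohesively efficient extension operator. Then Φ satisfies (ET) and (EES) and, for every f ∈ F, Φ(f) satisfies (f-IECoS), if and only if for every f ∈ F, every v ∈ V and every i ∈ N, Φ_i(f)(v) = f_i(v) + (1/n)·(v* − Σ_{k∈N} f_k(v)), where v* = max_{P} Σ_{T∈P} v(T) over all partitions P of N. -/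
/-!
Corollary B.1(1): characterization of the cohesive egalitarian surplus sharing
operator.
-/

namespace Stmt7

/-- A TU-game on the player set `N`: a function on coalitions vanishing at `∅`. -/
abbrev Game (N : Type*) := {v : Finset N → ℝ // v ∅ = 0}

/-- A solution assigns to each game a payoff vector. -/
abbrev Solution (N : Type*) := Game N → N → ℝ

variable {N : Type*} [Fintype N] [DecidableEq N]

/-- `P` is a partition of the player set `S`. -/
def IsPartition (S : Finset N) (P : Finset (Finset N)) : Prop :=
  (∀ C ∈ P, C.Nonempty) ∧
  (∀ C ∈ P, ∀ C' ∈ P, C ≠ C' → Disjoint C C') ∧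
  P.biUnion id = S

/-- The trivial coalition structure `{N}` is a partition of `N`. -/
theorem isPartition_singleton [Nonempty N] :
    IsPartition (Finset.univ : Finset N) ({Finset.univ} : Finset (Finset N)) := by
  refine ⟨?_, ?_, ?_⟩
  · intro C hC
    rw [Finset.mem_singleton] at hC
    subst hC
    exact Finset.univ_nonempty
  · intro C hC C' hC' hne
    rw [Finset.mem_singleton] at hC hC'
    subst hC; subst hC'
    exact absurd rfl hne
  · rw [Finset.singleton_biUnion]; rfl

/-- The cohesive worth `v* = max_{P} Σ_{T ∈ P} v(T)`, the maximum over all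
partitions `P` of `N` of the total worth of the blocks. -/
noncomputable def cohesiveWorth [Nonempty N] (v : Game N) : ℝ :=
  letI : DecidablePred (IsPartition (Finset.univ : Finset N)) := Classical.decPred _
  ((Finset.univ : Finset (Finset (Finset N))).filter
      (IsPartition (Finset.univ : Finset N))).sup'
    ⟨{Finset.univ}, by
      simp only [Finset.mem_filter, Finset.mem_univ, true_and]
      exact isPartition_singleton⟩
    (fun P => ∑ T ∈ P, v.1 T)

variable [Nonempty N]

omit [Nonempty N] in
theorem sum_card_of_partition (P : Finset (Finset N))
    (hP : IsPartition (Finset.univ : Finset N) P) :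
    ∑ T ∈ P, T.card = Fintype.card N := by
  obtain ⟨h1, h2, h3⟩ := hP
  have := Finset.card_biUnion (s := P) (t := id) h2
  rw [h3, Finset.card_univ] at this
  simpa using this.symm

theorem cohesiveWorth_additive (c : ℝ) :
    cohesiveWorth (⟨fun T => c * (T.card : ℝ), by simp⟩ : Game N)
      = c * (Fintype.card N : ℝ) := by
  letI : DecidablePred (IsPartition (Finset.univ : Finset N)) := Classical.decPred _
  unfold cohesiveWorth
  have hval : ∀ P : Finset (Finset N), IsPartition (Finset.univ : Finset N) P →
      (∑ T ∈ P, c * (T.card : ℝ)) = c * (Fintype.card N : ℝ) := by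
    intro P hP
    rw [← Finset.mul_sum]
    congr 1
    rw [← Nat.cast_sum]
    exact_mod_cast congrArg (Nat.cast : ℕ → ℝ) (sum_card_of_partition P hP)
  apply le_antisymm
  · apply Finset.sup'_le
    intro P hP
    rw [Finset.mem_filter] at hP
    exact le_of_eq (hval P hP.2)
  · have hmem : ({(Finset.univ : Finset N)} : Finset (Finset N)) ∈
        (Finset.univ : Finset (Finset (Finset N))).filter
          (IsPartition (Finset.univ : Finset N)) := by
      simp only [Finset.mem_filter, Finset.mem_univ, true_and]
      exact isPartition_singleton
    calc c * (Fintype.card N : ℝ)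
        = ∑ T ∈ ({(Finset.univ : Finset N)} : Finset (Finset N)), c * (T.card : ℝ) :=
          (hval _ isPartition_singleton).symm
      _ ≤ _ := Finset.le_sup' (fun P => ∑ T ∈ P, c * (T.card : ℝ)) hmem


/-- Cohesive efficiency (CoE). -/
def CohesivelyEfficient (φ : Solution N) : Prop :=
  ∀ v : Game N, ∑ i, φ v i = cohesiveWorth v

/-- Equal treatment (ET) for an operator. -/
def ET (Φ : Solution N → Solution N) : Prop :=
  ∀ (f : Solution N) (i j : N), (∀ v, f v i = f v j) → ∀ v, Φ f v i = Φ f v j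

/-- Equality for equal surplus (EES) for an operator. -/
def EES (Φ : Solution N → Solution N) : Prop :=
  ∀ (f f' : Solution N) (v : Game N) (i : N),
    (∑ k, f v k) = (∑ k, f' v k) → f v i = f' v i → Φ f v i = Φ f' v i

/-- The `f`-individualistic property for equal cohesive surplus (`f`-IECoS). -/
def IECoS (f φ : Solution N) : Prop :=
  ∀ (v w : Game N) (i : N),
    cohesiveWorth v - ∑ k, f v k = cohesiveWorth w - ∑ k, f w k →
    f v i = f w i → φ v i = φ w i

/-- Corollary B.1(1): a cohesively efficient extension operator satisfies (ET),
(EES), and `Φ(f)` satisfies (`f`-IECoS) for every `f`, iff `Φ` is the cohesive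
egalitarian surplus sharing operator. -/
theorem cohesive_ess_operator_characterization
    (Φ : Solution N → Solution N)
    (hEff : ∀ f : Solution N, CohesivelyEfficient (Φ f)) :
    (ET Φ ∧ EES Φ ∧ ∀ f : Solution N, IECoS f (Φ f)) ↔
      (∀ (f : Solution N) (v : Game N) (i : N),
        Φ f v i = f v i +
          (1 / (Fintype.card N : ℝ)) * (cohesiveWorth v - ∑ k, f v k)) := by
  classical
  have hn0 : (Fintype.card N : ℝ) ≠ 0 := by
    exact_mod_cast Fintype.card_ne_zero
  constructor
  · rintro ⟨hET, hEES, hIECoS⟩ f v i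
    set n : ℝ := (Fintype.card N : ℝ) with hn
    set a : ℝ := f v i with ha
    set S : ℝ := ∑ k, f v k with hS
    set s : ℝ := cohesiveWorth v - S with hs
    -- For a constant solution, Φ splits the cohesive worth equally.
    have key : ∀ (u : Game N) (φ : Solution N) (b : ℝ),
        (∀ w' j, φ w' j = b) → Φ φ u i = cohesiveWorth u / n := by
      intro u φ b hφ
      have hsum := hEff φ u
      have heq : ∀ j, Φ φ u j = Φ φ u i := fun j =>
        hET φ j i (fun w' => by rw [hφ, hφ]) u
      rw [Finset.sum_congr rfl (fun j _ => heq j), Finset.sum_const,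
        Finset.card_univ, nsmul_eq_mul] at hsum
      rw [eq_div_iff hn0]
      rw [← hsum]; ring
    set c : ℝ := a + s / n with hc
    set w : Game N := (⟨fun T => c * (T.card : ℝ), by simp⟩ : Game N) with hw
    have hwstar : cohesiveWorth w = n * a + s := by
      rw [hw, cohesiveWorth_additive, ← hn, hc]
      field_simp
    by_cases hvw : w = v
    · -- degenerate case: here S = n * a
      have hSa : S = n * a := by
        have : cohesiveWorth w = cohesiveWorth v := by rw [hvw]
        rw [hwstar] at this
        have : n * a + s = S + s := by rw [this, hs]; ring
        linarith
      set g : Solution N := fun _ _ => a with hg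
      have h1 : Φ f v i = Φ g v i := by
        apply hEES
        · rw [← hS, hg]
          simp [Finset.sum_const, Finset.card_univ, hSa, hn, nsmul_eq_mul]
        · rw [← ha, hg]
      have h2 : Φ g v i = cohesiveWorth v / n := key v g a (fun _ _ => rfl)
      rw [h1, h2]
      have hv : cohesiveWorth v = S + s := by rw [hs]; ring
      rw [hv, hSa]
      field_simp
    · set h : Solution N := fun w' j => if w' = v then f v j else a with hh
      have hhv : ∀ j, h v j = f v j := fun j => by rw [hh]; simp
      have hhw : ∀ j, h w j = a := fun j => by rw [hh]; simp [hvw]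
      have hsumv : ∑ k, h v k = S := by
        rw [hS]; exact Finset.sum_congr rfl (fun k _ => hhv k)
      have hsumw : ∑ k, h w k = n * a := by
        rw [Finset.sum_congr rfl (fun k _ => hhw k), Finset.sum_const,
          Finset.card_univ, nsmul_eq_mul, hn]
      have h1 : Φ f v i = Φ h v i := by
        apply hEES
        · rw [← hS, hsumv]
        · rw [← ha, hhv i]
      have h2 : Φ h v i = Φ h w i := by
        apply hIECoS h v w i
        · rw [hsumv, hwstar, hsumw]
          rw [hs]; ring
        · rw [hhv i, hhw i, ha]
      set g : Solution N := fun _ _ => a with hg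
      have h3 : Φ h w i = Φ g w i := by
        apply hEES
        · rw [hsumw, hg]
          simp [Finset.sum_const, Finset.card_univ, hn, nsmul_eq_mul]
        · rw [hhw i, hg]
      have h4 : Φ g w i = cohesiveWorth w / n := key w g a (fun _ _ => rfl)
      rw [h1, h2, h3, h4, hwstar]
      field_simp
  · intro hform
    refine ⟨?_, ?_, ?_⟩
    · intro f i j hij v
      rw [hform, hform, hij v]
    · intro f f' v i hsum hi
      rw [hform, hform, hsum, hi]
    · intro f v w i hsurp hi
      rw [hform, hform, hsurp, hi]

end Stmt7
end

section
/- Example 3.1 (failure of (EES) under (WEES)): Fix a player 1 ∈ N and a TU-game w ∈ V with Σ_{k∈N, k≠1} w({k}) ≠ 0, and define Φ : F → F by Φ_i(f)(v) = f_i(v) + (1/n)·(v(N) − Σ_{k∈N} f_k(v)) + f_i(w) − (1/n)·Σ_{k∈N} f_k(w) for all f ∈ F, i ∈ N and v ∈ V. Then: (a) Φ is an efficient extension operator; (b) Φ satisfies (ET) and (WEES); (c) Φ(f) satisfies (f-IES) for every f ∈ F; and (d) Φ does not satisfy (EES). -/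
/-!
Example 3.1: an efficient extension operator satisfying (ET), (WEES) and
(`f`-IES) for every `f`, which nevertheless violates (EES).
-/

namespace Stmt9

/-- A TU-game on the player set `N`: a function on coalitions vanishing at `∅`. -/
abbrev Game (N : Type*) := {v : Finset N → ℝ // v ∅ = 0}

/-- A solution assigns to each game a payoff vector. -/
abbrev Solution (N : Type*) := Game N → N → ℝ

variable {N : Type*} [Fintype N] [DecidableEq N]

/-- Efficiency (E). -/
def Efficient (φ : Solution N) : Prop :=
  ∀ v : Game N, ∑ i, φ v i = v.1 Finset.univ

/-- Equal treatment (ET) for an operator. -/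
def ET (Φ : Solution N → Solution N) : Prop :=
  ∀ (f : Solution N) (i j : N), (∀ v, f v i = f v j) → ∀ v, Φ f v i = Φ f v j

/-- Equality for equal surplus (EES) for an operator. -/
def EES (Φ : Solution N → Solution N) : Prop :=
  ∀ (f f' : Solution N) (v : Game N) (i : N),
    (∑ k, f v k) = (∑ k, f' v k) → f v i = f' v i → Φ f v i = Φ f' v i

/-- Weak equality for equal surplus (WEES) for an operator. -/
def WEES (Φ : Solution N → Solution N) : Prop :=
  ∀ (f f' : Solution N) (i : N),
    (∀ v, (∑ k, f v k) = ∑ k, f' v k) → (∀ v, f v i = f' v i) →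
    ∀ v, Φ f v i = Φ f' v i

/-- The `f`-individualistic property for equal surplus (`f`-IES). -/
def IES (f φ : Solution N) : Prop :=
  ∀ (v w : Game N) (i : N),
    v.1 Finset.univ - ∑ k, f v k = w.1 Finset.univ - ∑ k, f w k →
    f v i = f w i → φ v i = φ w i

/-- Equal surplus sharing of `f`, shifted by the deviation of `f` from equal division at the
reference game `w`. -/
noncomputable def shiftedESS (w : Game N) (f : Solution N) : Solution N := fun v i =>
  f v i + (1 / (Fintype.card N : ℝ)) * (v.1 Finset.univ - ∑ k, f v k)
    + f w i - (1 / (Fintype.card N : ℝ)) * ∑ k, f w k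

section

open Finset

omit [DecidableEq N] in
theorem efficient_shiftedESS [Nonempty N] (w : Game N) (f : Solution N) :
    Efficient (shiftedESS w f) := by
  intro v
  have hn : (Fintype.card N : ℝ) ≠ 0 := by exact_mod_cast Fintype.card_ne_zero
  simp only [shiftedESS, sum_add_distrib, sum_sub_distrib, sum_const, card_univ, nsmul_eq_mul]
  field_simp
  ring

omit [DecidableEq N] in
theorem et_shiftedESS (w : Game N) : ET (shiftedESS w) := by
  intro f i j h v
  simp only [shiftedESS, h v, h w]

omit [DecidableEq N] in
theorem wees_shiftedESS (w : Game N) : WEES (shiftedESS w) := by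
  intro f f' i hsum hi v
  simp only [shiftedESS, hsum v, hsum w, hi v, hi w]

omit [DecidableEq N] in
theorem ies_shiftedESS (w : Game N) (f : Solution N) : IES f (shiftedESS w f) := by
  intro v u i hsurplus hi
  simp only [shiftedESS, hi, hsurplus]

theorem not_ees_shiftedESS (one : N) (w : Game N)
    (hw : (∑ k ∈ univ.erase one, w.1 {k}) ≠ 0) : ¬ EES (shiftedESS w) := by
  intro hEES
  -- `f` agrees with `0` at the null game, but `Φ` also reads `f` at `w`, where they differ.
  let f : Solution N := fun v k => if k ≠ one then v.1 {k} else 0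
  let zero : Game N := ⟨0, rfl⟩
  have hf_zero : f zero = 0 := funext fun k => by simp [f, zero]
  have hf_w : ∑ k, f w k = ∑ k ∈ univ.erase one, w.1 {k} := by
    rw [← sum_filter, filter_ne']
  have hf_one : f w one = 0 := if_neg (not_not.2 rfl)
  have hn : (Fintype.card N : ℝ) ≠ 0 := by
    have : Nonempty N := ⟨one⟩
    exact_mod_cast Fintype.card_ne_zero
  have h := hEES 0 f zero one (by simp [hf_zero]) (by simp [hf_zero])
  simp only [shiftedESS, hf_zero, hf_w, hf_one, zero, Pi.zero_apply, sum_const_zero] at h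
  have hS : 1 / (Fintype.card N : ℝ) * ∑ k ∈ univ.erase one, w.1 {k} = 0 := by linarith
  exact hw ((mul_eq_zero.1 hS).resolve_left (one_div_ne_zero hn))

end

theorem example_wees_not_ees_general
    (one : N) (w : Game N)
    (hw : (∑ k ∈ Finset.univ.erase one, w.1 {k}) ≠ 0)
    (Φ : Solution N → Solution N)
    (hΦ : ∀ (f : Solution N) (v : Game N) (i : N),
      Φ f v i = f v i + (1 / (Fintype.card N : ℝ)) * (v.1 Finset.univ - ∑ k, f v k)
        + f w i - (1 / (Fintype.card N : ℝ)) * ∑ k, f w k) :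
    (∀ f : Solution N, Efficient (Φ f)) ∧
    ET Φ ∧ WEES Φ ∧
    (∀ f : Solution N, IES f (Φ f)) ∧
    ¬ EES Φ := by
  obtain rfl : Φ = shiftedESS w := funext fun f => funext fun v => funext (hΦ f v)
  have : Nonempty N := ⟨one⟩
  exact ⟨efficient_shiftedESS w, et_shiftedESS w, wees_shiftedESS w, ies_shiftedESS w,
    not_ees_shiftedESS one w hw⟩

/-- Example 3.1: fixing a player `1 ∈ N` and a game `w` with
`Σ_{k ≠ 1} w({k}) ≠ 0`, the operator
`Φ_i(f)(v) = ESS_i(f)(v) + f_i(w) − (Σ_k f_k(w))/n` is an efficient extension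
operator satisfying (ET), (WEES) and (`f`-IES) for each `f`, but not (EES). -/
theorem example_wees_not_ees [Nonempty N]
    (one : N) (w : Game N)
    (hw : (∑ k ∈ Finset.univ.erase one, w.1 {k}) ≠ 0)
    (Φ : Solution N → Solution N)
    (hΦ : ∀ (f : Solution N) (v : Game N) (i : N),
      Φ f v i = f v i + (1 / (Fintype.card N : ℝ)) * (v.1 Finset.univ - ∑ k, f v k)
        + f w i - (1 / (Fintype.card N : ℝ)) * ∑ k, f w k) :
    (∀ f : Solution N, Efficient (Φ f)) ∧
    ET Φ ∧ WEES Φ ∧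
    (∀ f : Solution N, IES f (Φ f)) ∧
    ¬ EES Φ :=
  example_wees_not_ees_general one w hw Φ hΦ

end Stmt9
end

section
/- Example 3.2 (failure of (EES) under (WEES), proportional version): Fix a player 1 ∈ N and a TU-game w ∈ V_+ with Σ_{k∈N, k≠1} w({k}) ≠ 0, and define an operator Φ mapping each f ∈ F_+ to the solution on V_+ given by Φ_i(f)(v) = (f_i(v)/Σ_{k∈N} f_k(v))·v(N) + f_i(w) − (1/n)·Σ_{k∈N} f_k(w) for all i ∈ N and v ∈ V_+. Then: (a) Σ_{i∈N} Φ_i(f)(v) = v(N) for every f ∈ F_+ and v ∈ V_+ (efficiency); (b) Φ satisfies (ET) and (WEES); (c) Φ(f) satisfies (f-IER) for every f ∈ F_+; and (d) Φ does not satisfy (EES). -/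
/-!
Example 3.2: a (proportional-type) efficient extension operator on `F₊`
satisfying (ET), (WEES) and (`f`-IER) for every `f`, which nevertheless
violates (EES).
-/

namespace Stmt10

/-- A TU-game on the player set `N`: a function on coalitions vanishing at `∅`. -/
abbrev Game (N : Type*) := {v : Finset N → ℝ // v ∅ = 0}

variable (N : Type*) [Fintype N] [DecidableEq N]

/-- `V₊`: TU-games whose sum of individual worths is strictly positive. -/
abbrev GamePos := {v : Game N // 0 < ∑ k, v.1 {k}}

/-- `F₊`: positive solutions, i.e. maps on `V₊` whose payoffs always have a
strictly positive sum. -/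
abbrev SolPos := {f : GamePos N → N → ℝ // ∀ v, 0 < ∑ k, f v k}

variable {N}

/-- Equal treatment (ET) for an operator on `F₊`. -/
def ET (Φ : SolPos N → GamePos N → N → ℝ) : Prop :=
  ∀ (f : SolPos N) (i j : N), (∀ v, f.1 v i = f.1 v j) → ∀ v, Φ f v i = Φ f v j

/-- Equality for equal surplus (EES) for an operator on `F₊`. -/
def EES (Φ : SolPos N → GamePos N → N → ℝ) : Prop :=
  ∀ (f f' : SolPos N) (v : GamePos N) (i : N),
    (∑ k, f.1 v k) = (∑ k, f'.1 v k) → f.1 v i = f'.1 v i → Φ f v i = Φ f' v i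

/-- Weak equality for equal surplus (WEES) for an operator on `F₊`. -/
def WEES (Φ : SolPos N → GamePos N → N → ℝ) : Prop :=
  ∀ (f f' : SolPos N) (i : N),
    (∀ v, (∑ k, f.1 v k) = ∑ k, f'.1 v k) → (∀ v, f.1 v i = f'.1 v i) →
    ∀ v, Φ f v i = Φ f' v i

/-- The `f`-individualistic property for equal ratio (`f`-IER). -/
def IER (f : SolPos N) (φ : GamePos N → N → ℝ) : Prop :=
  ∀ (v w : GamePos N) (i : N),
    v.1.1 Finset.univ / (∑ k, f.1 v k) = w.1.1 Finset.univ / (∑ k, f.1 w k) →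
    f.1 v i = f.1 w i → φ v i = φ w i

/-- Example 3.2: fixing a player `1 ∈ N` and a game `w ∈ V₊` with
`Σ_{k ≠ 1} w({k}) ≠ 0`, the operator
`Φ_i(f)(v) = PS_i(f)(v) + f_i(w) − (Σ_k f_k(w))/n` is efficient and satisfies
(ET), (WEES) and (`f`-IER) for each `f ∈ F₊`, but not (EES). -/
theorem example_wees_not_ees_ps [Nonempty N]
    (one : N) (w : GamePos N)
    (hw : (∑ k ∈ Finset.univ.erase one, w.1.1 {k}) ≠ 0)
    (Φ : SolPos N → GamePos N → N → ℝ)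
    (hΦ : ∀ (f : SolPos N) (v : GamePos N) (i : N),
      Φ f v i = (f.1 v i / ∑ k, f.1 v k) * v.1.1 Finset.univ
        + f.1 w i - (1 / (Fintype.card N : ℝ)) * ∑ k, f.1 w k) :
    (∀ (f : SolPos N) (v : GamePos N), ∑ i, Φ f v i = v.1.1 Finset.univ) ∧
    ET Φ ∧ WEES Φ ∧
    (∀ f : SolPos N, IER f (Φ f)) ∧
    ¬ EES Φ := by
  classical
  have hcard : (0 : ℝ) < (Fintype.card N : ℝ) := by
    exact_mod_cast Fintype.card_pos
  have hn : (Fintype.card N : ℝ) ≠ 0 := hcard.ne'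
  refine ⟨?_, ?_, ?_, ?_, ?_⟩
  · -- efficiency
    intro f v
    have hS : (∑ k, f.1 v k) ≠ 0 := (f.2 v).ne'
    simp only [hΦ]
    rw [Finset.sum_sub_distrib, Finset.sum_add_distrib]
    have h1 : ∑ i, f.1 v i / (∑ k, f.1 v k) * v.1.1 Finset.univ
        = v.1.1 Finset.univ := by
      simp only [div_mul_eq_mul_div]
      rw [← Finset.sum_div, ← Finset.sum_mul]
      exact mul_div_cancel_left₀ _ hS
    have h2 : ∑ _i : N, (1 / (Fintype.card N : ℝ)) * ∑ k, f.1 w k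
        = ∑ k, f.1 w k := by
      rw [Finset.sum_const, Finset.card_univ, nsmul_eq_mul]
      field_simp
    rw [h1, h2]; ring
  · -- ET
    intro f i j h v
    simp only [hΦ, h v, h w]
  · -- WEES
    intro f f' i hsum hfi v
    simp only [hΦ, hsum v, hsum w, hfi v, hfi w]
  · -- f-IER
    intro f v u i hr hfi
    simp only [hΦ, div_mul_eq_mul_div, mul_div_assoc, hr, hfi]
  · -- not EES
    intro hEES
    have hne : (Finset.univ.erase one).Nonempty := by
      by_contra h
      rw [Finset.not_nonempty_iff_eq_empty] at h
      simp [h] at hw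
    obtain ⟨k0, hk0⟩ := hne
    have h2n : (2 : ℝ) ≤ (Fintype.card N : ℝ) := by
      have : 1 < Fintype.card N :=
        Fintype.one_lt_card_iff.2 ⟨k0, one, (Finset.mem_erase.1 hk0).1⟩
      exact_mod_cast this
    have hv2pos : (0:ℝ) < ∑ k, (2 * w.1.1 {k}) := by
      have := w.2
      rw [← Finset.mul_sum]; linarith
    set v2 : GamePos N := ⟨⟨fun s => 2 * w.1.1 s, by simp [w.1.2]⟩, hv2pos⟩
      with hv2def
    have hv2ne : v2 ≠ w := by
      intro h
      have hs : ∑ k, v2.1.1 {k} = ∑ k, w.1.1 {k} := by rw [h]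
      have h2 : ∑ k, (2 * w.1.1 {k}) = ∑ k, w.1.1 {k} := hs
      rw [← Finset.mul_sum] at h2
      have := w.2
      nlinarith
    set f : SolPos N := ⟨fun _ _ => 1, by
      intro v
      simp only [Finset.sum_const, Finset.card_univ, nsmul_eq_mul, mul_one]
      exact hcard⟩ with hfdef
    set f' : SolPos N := ⟨fun v k => if v = w then (if k = one then 2 else 1) else 1, by
      intro v
      refine Finset.sum_pos (fun k _ => ?_) Finset.univ_nonempty
      dsimp only
      split
      · split <;> norm_num
      · norm_num⟩ with hf'def
    have hsum1 : (∑ k, f.1 v2 k) = (Fintype.card N : ℝ) := by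
      simp [hfdef]
    have hsum1' : (∑ k, f'.1 v2 k) = (Fintype.card N : ℝ) := by
      simp [hf'def, hv2ne]
    have hsumw : (∑ k, f.1 w k) = (Fintype.card N : ℝ) := by
      simp [hfdef]
    have hsumw' : (∑ k, f'.1 w k) = (Fintype.card N : ℝ) + 1 := by
      have h : (∑ k, f'.1 w k) = ∑ k : N, ((if k = one then (1:ℝ) else 0) + 1) := by
        refine Finset.sum_congr rfl fun k _ => ?_
        show (if (w:GamePos N) = w then (if k = one then (2:ℝ) else 1) else 1) = _
        rw [if_pos rfl]
        split <;> norm_num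
      rw [h, Finset.sum_add_distrib,
        Finset.sum_ite_eq' Finset.univ one (fun _ => (1:ℝ))]
      simp [add_comm]
    have key := hEES f f' v2 one (by rw [hsum1, hsum1']) (by simp [hfdef, hf'def, hv2ne])
    rw [hΦ, hΦ, hsum1, hsum1'] at key
    rw [hsumw'] at key
    rw [show f.1 v2 one = 1 from rfl] at key
    have hf'v2 : f'.1 v2 one = 1 := by
      show (if v2 = w then (if one = one then (2:ℝ) else 1) else 1) = 1
      rw [if_neg hv2ne]
    have hf'w : f'.1 w one = 2 := by
      show (if (w:GamePos N) = w then (if one = one then (2:ℝ) else 1) else 1) = 2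
      rw [if_pos rfl, if_pos rfl]
    rw [hf'v2, hf'w] at key
    have e1 : 1 / (Fintype.card N : ℝ) * (Fintype.card N : ℝ) = 1 := by
      field_simp
    have e2 : 1 / (Fintype.card N : ℝ) * ((Fintype.card N : ℝ) + 1)
        = 1 + 1 / (Fintype.card N : ℝ) := by
      field_simp
    have hlt : 1 / (Fintype.card N : ℝ) < 1 := by
      rw [div_lt_one hcard]; linarith
    rw [e1, e2] at key
    linarith

end Stmt10
end

section
/- Symmetric two-argument dependence under (WEES) (Appendix A remark, step 1): Suppose n ≥ 3 and Φ : F → F is an efficient extension operator satisfying (ET) and (WEES). Then for all f, f' ∈ F and all i, j ∈ N, if f_i = f'_j (as functions on V) and Σ_{k∈N} f_k = Σ_{k∈N} f'_k (as functions on V), then Φ_i(f) = Φ_j(f'). -/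
/-!
Appendix A remark, step 1: under (ET) and (WEES) (with `n ≥ 3`), the value
`Φ_i(f)` depends only (and symmetrically in the player) on `f_i` and `Σ_k f_k`.
-/

namespace Stmt11

/-- A TU-game on the player set `N`: a function on coalitions vanishing at `∅`. -/
abbrev Game (N : Type*) := {v : Finset N → ℝ // v ∅ = 0}

/-- A solution assigns to each game a payoff vector. -/
abbrev Solution (N : Type*) := Game N → N → ℝ

variable {N : Type*} [Fintype N] [DecidableEq N]

/-- Efficiency (E). -/
def Efficient (φ : Solution N) : Prop :=
  ∀ v : Game N, ∑ i, φ v i = v.1 Finset.univ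

/-- Equal treatment (ET) for an operator. -/
def ET (Φ : Solution N → Solution N) : Prop :=
  ∀ (f : Solution N) (i j : N), (∀ v, f v i = f v j) → ∀ v, Φ f v i = Φ f v j

/-- Weak equality for equal surplus (WEES) for an operator. -/
def WEES (Φ : Solution N → Solution N) : Prop :=
  ∀ (f f' : Solution N) (i : N),
    (∀ v, (∑ k, f v k) = ∑ k, f' v k) → (∀ v, f v i = f' v i) →
    ∀ v, Φ f v i = Φ f' v i

/-- Appendix A remark, step 1: if `n ≥ 3` and `Φ` is an efficient extension
operator satisfying (ET) and (WEES), then `Φ_i(f) = Φ_j(f')` whenever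
`f_i = f'_j` and `Σ_k f_k = Σ_k f'_k`. -/
theorem symmetric_two_argument_dependence
    (hn : 3 ≤ Fintype.card N)
    (Φ : Solution N → Solution N)
    (hEff : ∀ f : Solution N, Efficient (Φ f))
    (hET : ET Φ) (hWEES : WEES Φ) :
    ∀ (f f' : Solution N) (i j : N),
      (∀ v, f v i = f' v j) → (∀ v, (∑ k, f v k) = ∑ k, f' v k) →
      ∀ v, Φ f v i = Φ f' v j := by
  intro f f' i j hij hsum
  by_cases hijeq : i = j
  · subst hijeq
    exact hWEES f f' i hsum hij
  · -- pick a third player l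
    have hcard : ({i, j} : Finset N).card < Fintype.card N := by
      have h2 : ({i, j} : Finset N).card ≤ 2 := Finset.card_insert_le _ _ |>.trans (by simp)
      omega
    obtain ⟨l, hl⟩ : (({i, j} : Finset N)ᶜ).Nonempty := by
      rw [← Finset.card_pos, Finset.card_compl]
      omega
    have hli : l ≠ i := by
      intro h; apply Finset.mem_compl.mp hl; simp [h]
    have hlj : l ≠ j := by
      intro h; apply Finset.mem_compl.mp hl; simp [h]
    set h : Solution N := fun v k =>
      if k = i ∨ k = j then f v i
      else if k = l then (∑ m, f v m) - 2 * f v i else 0 with hdef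
    have hsumh : ∀ v, (∑ k, h v k) = ∑ k, f v k := by
      intro v
      have hsub : (∑ k, h v k) = ∑ k ∈ ({i, j, l} : Finset N), h v k := by
        refine (Finset.sum_subset (Finset.subset_univ _) ?_).symm
        intro x _ hx
        simp only [Finset.mem_insert, Finset.mem_singleton, not_or] at hx
        simp [hdef, hx.1, hx.2.1, hx.2.2]
      rw [hsub]
      rw [Finset.sum_insert (by simp [hijeq, Ne.symm hli]),
        Finset.sum_insert (by simp [Ne.symm hlj])]
      simp only [hdef, Finset.sum_singleton]
      simp only [true_or, or_true, if_true]
      rw [if_neg (by simp [hli, hlj])]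
      ring
    have step1 : ∀ v, Φ f v i = Φ h v i :=
      hWEES f h i (fun v => (hsumh v).symm) (fun v => by simp [hdef])
    have step2 : ∀ v, Φ h v i = Φ h v j :=
      hET h i j (fun v => by simp [hdef])
    have step3 : ∀ v, Φ h v j = Φ f' v j :=
      hWEES h f' j (fun v => (hsumh v).trans (hsum v))
        (fun v => by simp [hdef, Ne.symm hijeq, hij v])
    intro v
    rw [step1 v, step2 v, step3 v]

end Stmt11
end

section
/- Additive representation under (WEES) (Appendix A remark, equation (A.1)): Suppose n ≥ 3 and Φ : F → F is an efficient extension operator satisfying (ET) and (WEES). Then there exists a map Ψ assigning to each function s : V → ℝ a functional Ψ^s : (V → ℝ) → (V → ℝ) such that (i) each Ψ^s is additive, i.e. Ψ^s(a + b) = Ψ^s(a) + Ψ^s(b) for all a, b : V → ℝ, and (ii) for every f ∈ F, every i ∈ N and every v ∈ V, Φ_i(f)(v) = Ψ^{Σ_{k∈N} f_k}(f_i)(v) + (1/n)·(v(N) − Ψ^{Σ_{k∈N} f_k}(Σ_{k∈N} f_k)(v)). -/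
/-!
Appendix A remark, equation (A.1): additive representation of an efficient
extension operator satisfying (ET) and (WEES) when `n ≥ 3`.
-/

namespace Stmt12

/-- A TU-game on the player set `N`: a function on coalitions vanishing at `∅`. -/
abbrev Game (N : Type*) := {v : Finset N → ℝ // v ∅ = 0}

/-- A solution assigns to each game a payoff vector. -/
abbrev Solution (N : Type*) := Game N → N → ℝ

variable {N : Type*} [Fintype N] [DecidableEq N]

/-- Efficiency (E). -/
def Efficient (φ : Solution N) : Prop :=
  ∀ v : Game N, ∑ i, φ v i = v.1 Finset.univ

/-- Equal treatment (ET) for an operator. -/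
def ET (Φ : Solution N → Solution N) : Prop :=
  ∀ (f : Solution N) (i j : N), (∀ v, f v i = f v j) → ∀ v, Φ f v i = Φ f v j

/-- Weak equality for equal surplus (WEES) for an operator. -/
def WEES (Φ : Solution N → Solution N) : Prop :=
  ∀ (f f' : Solution N) (i : N),
    (∀ v, (∑ k, f v k) = ∑ k, f' v k) → (∀ v, f v i = f' v i) →
    ∀ v, Φ f v i = Φ f' v i

lemma sum_off_singleton (i : N) (h : N → ℝ) (c : ℝ)
    (hc : ∀ k, k ≠ i → h k = c) :
    ∑ k, h k = h i + ((Fintype.card N : ℝ) - 1) * c := by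
  have h1 : 1 ≤ Fintype.card N := Fintype.card_pos_iff.mpr ⟨i⟩
  rw [← Finset.add_sum_erase _ h (Finset.mem_univ i)]
  congr 1
  rw [Finset.sum_congr rfl (fun k hk => hc k (Finset.ne_of_mem_erase hk)),
    Finset.sum_const, Finset.card_erase_of_mem (Finset.mem_univ i), Finset.card_univ,
    nsmul_eq_mul, Nat.cast_sub h1]
  norm_num

lemma sum_off_pair (i j : N) (hij : i ≠ j) (h : N → ℝ) (c : ℝ)
    (hc : ∀ k, k ≠ i → k ≠ j → h k = c) :
    ∑ k, h k = h i + h j + ((Fintype.card N : ℝ) - 2) * c := by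
  have h2 : 2 ≤ Fintype.card N := Fintype.one_lt_card_iff_nontrivial.mpr ⟨i, j, hij⟩
  rw [← Finset.add_sum_erase _ h (Finset.mem_univ i),
    ← Finset.add_sum_erase _ h (Finset.mem_erase.mpr ⟨hij.symm, Finset.mem_univ j⟩)]
  have : ∑ k ∈ (Finset.univ.erase i).erase j, h k = ((Fintype.card N : ℝ) - 2) * c := by
    rw [Finset.sum_congr rfl (fun k hk => by
      have hk' := Finset.mem_erase.mp hk
      have hk'' := Finset.mem_erase.mp hk'.2
      exact hc k hk''.1 hk'.1)]
    rw [Finset.sum_const, Finset.card_erase_of_mem (Finset.mem_erase.mpr ⟨hij.symm, Finset.mem_univ j⟩),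
      Finset.card_erase_of_mem (Finset.mem_univ i), Finset.card_univ, nsmul_eq_mul]
    rw [Nat.cast_sub (by omega), Nat.cast_sub (by omega)]
    push_cast
    ring
  rw [this]
  ring

/-- Equation (A.1): if `n ≥ 3` and `Φ` is an efficient extension operator
satisfying (ET) and (WEES), then there is a family of additive functionals
`Ψ^s` (indexed by the aggregate `s = Σ_k f_k`) such that
`Φ_i(f)(v) = Ψ^{Σf}(f_i)(v) + (1/n)(v(N) − Ψ^{Σf}(Σf)(v))`. -/
theorem additive_representation
    (hn : 3 ≤ Fintype.card N)
    (Φ : Solution N → Solution N)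
    (hEff : ∀ f : Solution N, Efficient (Φ f))
    (hET : ET Φ) (hWEES : WEES Φ) :
    ∃ Ψ : (Game N → ℝ) → (Game N → ℝ) → (Game N → ℝ),
      (∀ (s : Game N → ℝ) (a b : Game N → ℝ), Ψ s (a + b) = Ψ s a + Ψ s b) ∧
      (∀ (f : Solution N) (i : N) (v : Game N),
        Φ f v i =
          Ψ (fun u => ∑ k, f u k) (fun u => f u i) v +
            (1 / (Fintype.card N : ℝ)) *
              (v.1 Finset.univ - Ψ (fun u => ∑ k, f u k) (fun u => ∑ k, f u k) v)) := by
  classical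
  have hnR : (3 : ℝ) ≤ (Fintype.card N : ℝ) := by exact_mod_cast hn
  have hn0 : (Fintype.card N : ℝ) ≠ 0 := by linarith
  have hn1 : (Fintype.card N : ℝ) - 1 ≠ 0 := by linarith
  have hn2 : (Fintype.card N : ℝ) - 2 ≠ 0 := by linarith
  obtain ⟨t, -, htcard⟩ := Finset.exists_subset_card_eq
    (show 3 ≤ (Finset.univ : Finset N).card by simpa using hn)
  obtain ⟨i0, i1, i2, h01, h02, h12, rfl⟩ := Finset.card_eq_three.mp htcard
  -- canonical solution centered at i with component a and aggregate s
  set cs : N → (Game N → ℝ) → (Game N → ℝ) → Solution N :=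
    fun i s a v j => if j = i then a v else (s v - a v) / ((Fintype.card N : ℝ) - 1)
    with hcs
  have hcsagg : ∀ (i : N) (s a : Game N → ℝ) (v : Game N), ∑ k, cs i s a v k = s v := by
    intro i s a v
    rw [sum_off_singleton i _ ((s v - a v) / ((Fintype.card N : ℝ) - 1))
      (fun k hk => by simp [hcs, hk])]
    simp only [hcs, if_pos rfl]
    rw [mul_div_cancel₀ _ hn1]
    ring
  set G : (Game N → ℝ) → (Game N → ℝ) → Game N → ℝ :=
    fun s a v => Φ (cs i0 s a) v i0 with hG
  -- key lemma
  have key : ∀ (f : Solution N) (i : N) (s a : Game N → ℝ),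
      (∀ v, ∑ k, f v k = s v) → (∀ v, f v i = a v) → ∀ v, Φ f v i = G s a v := by
    intro f i s a hagg hia v
    have step1 : Φ f v i = Φ (cs i s a) v i :=
      hWEES f (cs i s a) i (fun u => (hagg u).trans (hcsagg i s a u).symm)
        (fun u => by simp [hcs, hia u]) v
    by_cases hii : i = i0
    · subst hii; exact step1
    · set tw : Solution N :=
        fun u j => if j = i then a u else if j = i0 then a u
          else (s u - 2 * a u) / ((Fintype.card N : ℝ) - 2) with htw
      have htwagg : ∀ u, ∑ k, tw u k = s u := by
        intro u
        rw [sum_off_pair i i0 hii _ ((s u - 2 * a u) / ((Fintype.card N : ℝ) - 2))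
          (fun k hk hk0 => by simp [htw, hk, hk0])]
        have e1 : tw u i = a u := by simp [htw]
        have e2 : tw u i0 = a u := by simp [htw, Ne.symm hii]
        rw [e1, e2, mul_div_cancel₀ _ hn2]
        ring
      have step2 : Φ (cs i s a) v i = Φ tw v i :=
        (hWEES tw (cs i s a) i (fun u => (htwagg u).trans (hcsagg i s a u).symm)
          (fun u => by simp [htw, hcs]) v).symm
      have step3 : Φ tw v i = Φ tw v i0 :=
        hET tw i i0 (fun u => by simp [htw, hii]) v
      have step4 : Φ tw v i0 = Φ (cs i0 s a) v i0 :=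
        hWEES tw (cs i0 s a) i0 (fun u => (htwagg u).trans (hcsagg i0 s a u).symm)
          (fun u => by simp [htw, hcs, Ne.symm hii]) v
      rw [step1, step2, step3, step4]
  -- efficiency in terms of G
  have effsum : ∀ (f : Solution N) (s : Game N → ℝ), (∀ u, ∑ k, f u k = s u) →
      ∀ v, ∑ i, G s (fun u => f u i) v = v.1 Finset.univ := by
    intro f s hagg v
    rw [← hEff f v]
    exact Finset.sum_congr rfl (fun i _ => (key f i s (fun u => f u i) hagg (fun _ => rfl) v).symm)
  -- additivity relation
  have Gadd : ∀ (s a b : Game N → ℝ) (v : Game N),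
      G s (fun u => a u + b u) v + G s (fun _ => 0) v = G s a v + G s b v := by
    intro s a b v
    set F : Solution N := fun u j =>
      if j = i0 then a u else if j = i1 then b u
      else if j = i2 then s u - a u - b u else 0 with hF
    set F' : Solution N := fun u j =>
      if j = i0 then a u + b u else if j = i1 then 0
      else if j = i2 then s u - a u - b u else 0 with hF'
    have hFagg : ∀ u, ∑ k, F u k = s u := by
      intro u
      rw [← Finset.sum_subset (Finset.subset_univ ({i0, i1, i2} : Finset N))
        (fun k _ hk => by
          simp only [Finset.mem_insert, Finset.mem_singleton, not_or] at hk
          simp [hF, hk.1, hk.2.1, hk.2.2])]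
      rw [Finset.sum_insert (by simp [h01, h02]), Finset.sum_insert (by simp [h12]),
        Finset.sum_singleton]
      simp [hF, h01.symm, h02.symm, h12.symm, Ne.symm]
    have hF'agg : ∀ u, ∑ k, F' u k = s u := by
      intro u
      rw [← Finset.sum_subset (Finset.subset_univ ({i0, i1, i2} : Finset N))
        (fun k _ hk => by
          simp only [Finset.mem_insert, Finset.mem_singleton, not_or] at hk
          simp [hF', hk.1, hk.2.1, hk.2.2])]
      rw [Finset.sum_insert (by simp [h01, h02]), Finset.sum_insert (by simp [h12]),
        Finset.sum_singleton]
      simp [hF', h01.symm, h02.symm, h12.symm, Ne.symm]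
    have e1 := effsum F s hFagg v
    have e2 := effsum F' s hF'agg v
    have hdiff : ∑ i, (G s (fun u => F u i) v - G s (fun u => F' u i) v) = 0 := by
      rw [Finset.sum_sub_distrib, e1, e2, sub_self]
    rw [← Finset.sum_subset (Finset.subset_univ ({i0, i1} : Finset N))
      (fun k _ hk => by
        simp only [Finset.mem_insert, Finset.mem_singleton, not_or] at hk
        have : (fun u => F u k) = (fun u => F' u k) := by
          funext u
          simp [hF, hF', hk.1, hk.2]
        rw [this, sub_self])] at hdiff
    rw [Finset.sum_insert (by simp [h01]), Finset.sum_singleton] at hdiff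
    have hFi0 : (fun u => F u i0) = a := by funext u; simp [hF]
    have hFi1 : (fun u => F u i1) = b := by funext u; simp [hF, Ne.symm h01]
    have hF'i0 : (fun u => F' u i0) = fun u => a u + b u := by funext u; simp [hF']
    have hF'i1 : (fun u => F' u i1) = fun _ => (0 : ℝ) := by
      funext u; simp [hF', Ne.symm h01]
    rw [hFi0, hFi1, hF'i0, hF'i1] at hdiff
    linarith
  -- the zero-baseline identity
  have Gzero : ∀ (s : Game N → ℝ) (v : Game N),
      G s s v + ((Fintype.card N : ℝ) - 1) * G s (fun _ => 0) v = v.1 Finset.univ := by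
    intro s v
    set H : Solution N := fun u j => if j = i0 then s u else 0 with hH
    have hHagg : ∀ u, ∑ k, H u k = s u := by
      intro u
      rw [sum_off_singleton i0 _ 0 (fun k hk => by simp [hH, hk])]
      simp [hH]
    have := effsum H s hHagg v
    rw [sum_off_singleton i0 _ (G s (fun _ => 0) v)
      (fun k hk => by
        have : (fun u => H u k) = fun _ => (0:ℝ) := by funext u; simp [hH, hk]
        rw [this])] at this
    have hHi0 : (fun u => H u i0) = s := by funext u; simp [hH]
    rw [hHi0] at this
    exact this
  -- define Ψ and conclude
  refine ⟨fun s a v => G s a v - G s (fun _ => 0) v, ?_, ?_⟩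
  · intro s a b
    funext v
    have := Gadd s a b v
    have hab : (a + b : Game N → ℝ) = fun u => a u + b u := rfl
    simp only [hab, Pi.add_apply]
    linarith
  · intro f i v
    set s : Game N → ℝ := fun u => ∑ k, f u k with hs
    have hkey := key f i s (fun u => f u i) (fun _ => rfl) (fun _ => rfl) v
    rw [hkey]
    have hz := Gzero s v
    field_simp
    ring_nf
    nlinarith [hz]


end Stmt12
end

section
/- Characterization of the f-ESS value (Theorem 2.1, ESS part, due to Funaki–Koriyama): Suppose f ∈ F satisfies: (1) Symmetry: f_i(v) = f_{π(i)}(πv) for every v ∈ V, every permutation π of N and every i ∈ N, where πv(πS) = v(S) for all S ⊆ N; (2) for every v ∈ V there exists c ∈ ℝ such that for every x ∈ ℝ^N each of whose components x_i equals either c or f_i(v), there exists w ∈ V with f(w) = x, and moreover if x_i = c for all i ∈ N then w can be chosen with all players pairwise symmetric in w; (3) for all v, w ∈ V, if v(S) = w(S) for every proper subset S ⊊ N, then f(v) = f(w). Then a solution φ satisfies (E), (ETS), and (f-IES) if and only if φ_i(v) = f_i(v) + (1/n)·(v(N) − Σ_{k∈N} f_k(v)) for every v ∈ V and i ∈ N.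 -/
/-!
The `f`-ESS value `fᵢ(v) + (v(N) - Σₖ fₖ(v)) / n` is efficient and satisfies `f`-IES on sight;
it satisfies ETS because a symmetric pair `i, j` leaves `v` fixed under the transposition `(i j)`,
so symmetry of `f` gives `fᵢ(v) = fⱼ(v)`.

Conversely, by (3) the worth of `N` can be changed without moving `f`, so every surplus `s` is
attained next to any prescribed vector `f(w)`, and by `f`-IES the payoff `φᵢ(v)` depends only on
`fᵢ(v)` and `s`. Take `c` from (2) for `v`. In a game with `f ≡ c`, all players symmetric and
surplus `s`, (E) and (ETS) force the payoff `c + s / n` on everybody. In a game with surplus `s`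
where `fᵢ = fᵢ(v)` and `fⱼ = c` for `j ≠ i`, `f`-IES transfers this payoff to every `j ≠ i`, and
(E) leaves `fᵢ(v) + s / n` for player `i`.
-/

namespace Stmt13

/-- A TU-game on the player set `N`: a function on coalitions vanishing at `∅`. -/
abbrev Game (N : Type*) := {v : Finset N → ℝ // v ∅ = 0}

/-- A solution assigns to each game a payoff vector. -/
abbrev Solution (N : Type*) := Game N → N → ℝ

variable {N : Type*} [Fintype N] [DecidableEq N]

/-- The game `πv` defined by `πv(πS) = v(S)`, i.e. `πv(T) = v(π⁻¹ T)`. -/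
def permGame (π : Equiv.Perm N) (v : Game N) : Game N :=
  ⟨fun S => v.1 (S.image π.symm), by
    show v.1 ((∅ : Finset N).image π.symm) = 0
    rw [Finset.image_empty]
    exact v.2⟩

/-- Players `i` and `j` are symmetric in the game `v`. -/
def SymmetricIn (v : Game N) (i j : N) : Prop :=
  ∀ S : Finset N, i ∉ S → j ∉ S →
    v.1 (insert i S) - v.1 S = v.1 (insert j S) - v.1 S

/-- Efficiency (E). -/
def Efficient (φ : Solution N) : Prop :=
  ∀ v : Game N, ∑ i, φ v i = v.1 Finset.univ

/-- Equal treatment for a solution (ETS): symmetric players get equal payoffs. -/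
def ETS (φ : Solution N) : Prop :=
  ∀ (v : Game N) (i j : N), SymmetricIn v i j → φ v i = φ v j

/-- The `f`-individualistic property for equal surplus (`f`-IES). -/
def IES (f φ : Solution N) : Prop :=
  ∀ (v w : Game N) (i : N),
    v.1 Finset.univ - ∑ k, f v k = w.1 Finset.univ - ∑ k, f w k →
    f v i = f w i → φ v i = φ w i

open Finset Equiv

def surplus (f : Solution N) (v : Game N) : ℝ :=
  v.1 univ - ∑ k, f v k

noncomputable def essValue (f : Solution N) : Solution N :=
  fun v i => f v i + (1 / (Fintype.card N : ℝ)) * surplus f v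

theorem image_swap_of_notMem {α : Type*} [DecidableEq α] {S : Finset α} {i j : α} (hi : i ∉ S)
    (hj : j ∉ S) : S.image (swap i j) = S :=
  calc S.image (swap i j) = S.image id :=
        image_congr fun _ ha => swap_apply_of_ne_of_ne (ne_of_mem_of_not_mem ha hi)
          (ne_of_mem_of_not_mem ha hj)
    _ = S := image_id

section SymmetricIn

omit [Fintype N]

theorem SymmetricIn.symm {v : Game N} {i j : N} (h : SymmetricIn v i j) : SymmetricIn v j i :=
  fun S hj hi => (h S hi hj).symm

theorem SymmetricIn.apply_insert_eq {v : Game N} {i j : N} (h : SymmetricIn v i j)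
    {S : Finset N} (hi : i ∉ S) (hj : j ∉ S) : v.1 (insert i S) = v.1 (insert j S) :=
  sub_left_inj.1 (h S hi hj)

theorem SymmetricIn.apply_image_swap_of_mem_of_notMem {v : Game N} {i j : N}
    (h : SymmetricIn v i j) {T : Finset N} (hi : i ∈ T) (hj : j ∉ T) :
    v.1 (T.image (swap i j)) = v.1 T := by
  have hjS : j ∉ T.erase i := fun hm => hj (mem_of_mem_erase hm)
  rw [← insert_erase hi, image_insert, swap_apply_left,
    image_swap_of_notMem (notMem_erase i T) hjS]
  exact (h.apply_insert_eq (notMem_erase i T) hjS).symm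

theorem SymmetricIn.apply_image_swap {v : Game N} {i j : N} (h : SymmetricIn v i j)
    (T : Finset N) : v.1 (T.image (swap i j)) = v.1 T := by
  rcases eq_or_ne i j with rfl | hij
  · rw [swap_self, coe_refl, image_id]
  by_cases hi : i ∈ T <;> by_cases hj : j ∈ T
  · have hjT : j ∈ T.erase i := mem_erase.2 ⟨hij.symm, hj⟩
    have hiS : i ∉ (T.erase i).erase j := fun hm => notMem_erase i T (mem_of_mem_erase hm)
    rw [← insert_erase hi, ← insert_erase hjT, image_insert, image_insert, swap_apply_left,
      swap_apply_right, image_swap_of_notMem hiS (notMem_erase j _), insert_comm]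
  · exact h.apply_image_swap_of_mem_of_notMem hi hj
  · rw [swap_comm]
    exact h.symm.apply_image_swap_of_mem_of_notMem hj hi
  · rw [image_swap_of_notMem hi hj]

theorem SymmetricIn.permGame_swap {v : Game N} {i j : N} (h : SymmetricIn v i j) :
    permGame (swap i j) v = v :=
  Subtype.ext <| funext fun T => by
    simp only [permGame, symm_swap]
    exact h.apply_image_swap T

end SymmetricIn

section essValue

omit [DecidableEq N]

variable (f : Solution N)

theorem sum_essValue [Nonempty N] (v : Game N) : ∑ i, essValue f v i = v.1 univ := by
  simp only [essValue, surplus, sum_add_distrib, sum_const, card_univ, nsmul_eq_mul]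
  field_simp
  ring

theorem efficient_essValue [Nonempty N] : Efficient (essValue f) :=
  sum_essValue f

theorem ies_essValue : IES f (essValue f) := fun v w i hs hf => by
  simp only [essValue, surplus, hs, hf]

theorem eq_sum_div_card_of_forall_eq [Nonempty N] (a : N → ℝ) {j : N} (h : ∀ k, a k = a j) :
    a j = (∑ k, a k) / Fintype.card N := by
  rw [sum_congr rfl fun k _ => h k, sum_const, card_univ, nsmul_eq_mul]
  field_simp

end essValue

theorem ets_essValue (f : Solution N)
    (h1 : ∀ (v : Game N) (π : Perm N) (i : N), f v i = f (permGame π v) (π i)) :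
    ETS (essValue f) := fun v i j h => by
  have hf : f v i = f v j := by simpa [h.permGame_swap] using h1 v (swap i j) i
  simp only [essValue, hf]

theorem Efficient.apply_eq_essValue_of_forall_ne [Nonempty N] {f φ : Solution N}
    (hE : Efficient φ) {v : Game N} {i : N} (h : ∀ k ≠ i, φ v k = essValue f v k) :
    φ v i = essValue f v i := by
  have hsum := (hE v).trans (sum_essValue f v).symm
  rw [← add_sum_erase _ _ (mem_univ i), ← add_sum_erase _ _ (mem_univ i),
    sum_congr rfl fun k hk => h k (ne_of_mem_erase hk)] at hsum
  exact add_right_cancel hsum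

omit [DecidableEq N] in
theorem IES.apply_eq_essValue_of_surplus_eq {f φ : Solution N} (hIES : IES f φ)
    {v w : Game N} {i : N} (hs : surplus f v = surplus f w) (hf : f v i = f w i)
    (hw : φ w i = essValue f w i) : φ v i = essValue f v i := by
  rw [hIES v w i hs hf, hw, ies_essValue f v w i hs hf]

def withValueUniv [Nonempty N] (w : Game N) (t : ℝ) : Game N :=
  ⟨fun S => if S = univ then t else w.1 S, by simp [w.2, univ_nonempty.ne_empty.symm]⟩

theorem SymmetricIn.withValueUniv [Nonempty N] {w : Game N} {i j : N} (h : SymmetricIn w i j)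
    (t : ℝ) : SymmetricIn (withValueUniv w t) i j := by
  intro S hi hj
  rcases eq_or_ne i j with rfl | hij
  · rfl
  have ne_univ : ∀ {T : Finset N} {a : N}, a ∉ T → T ≠ univ := fun ha hT => ha (hT ▸ mem_univ _)
  have hjS : j ∉ insert i S := by simp [hj, hij.symm]
  have hiS : i ∉ insert j S := by simp [hi, hij]
  simp only [Stmt13.withValueUniv, if_neg (ne_univ hi), if_neg (ne_univ hjS),
    if_neg (ne_univ hiS)]
  exact h S hi hj

theorem exists_surplus_eq [Nonempty N] {f : Solution N}
    (h3 : ∀ v w : Game N,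
      (∀ S : Finset N, S ≠ univ → v.1 S = w.1 S) → ∀ i, f v i = f w i)
    (w : Game N) (s : ℝ) :
    ∃ w' : Game N, f w' = f w ∧ surplus f w' = s ∧
      ∀ i j, SymmetricIn w i j → SymmetricIn w' i j := by
  set w' := withValueUniv w (s + ∑ k, f w k)
  have hf : f w' = f w := funext <| h3 _ _ fun S hS => if_neg hS
  refine ⟨w', hf, ?_, fun i j h => h.withValueUniv _⟩
  rw [surplus, hf]
  simp [w', withValueUniv]

theorem eq_essValue_of_efficient_of_ets_of_ies [Nonempty N] {f φ : Solution N}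
    (h2 : ∀ v : Game N, ∃ c : ℝ, ∀ x : N → ℝ,
      (∀ i, x i = c ∨ x i = f v i) →
      ∃ w : Game N, (∀ i, f w i = x i) ∧
        ((∀ i, x i = c) → ∀ i j, SymmetricIn w i j))
    (h3 : ∀ v w : Game N,
      (∀ S : Finset N, S ≠ univ → v.1 S = w.1 S) → ∀ i, f v i = f w i)
    (hE : Efficient φ) (hETS : ETS φ) (hIES : IES f φ) (v : Game N) (i : N) :
    φ v i = essValue f v i := by
  obtain ⟨c, hc⟩ := h2 v
  obtain ⟨w₀, hf₀, hsym₀⟩ := hc (fun _ => c) fun _ => Or.inl rfl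
  obtain ⟨w₀', hf₀', hs₀', hsym₀'⟩ := exists_surplus_eq h3 w₀ (surplus f v)
  have h₀ : ∀ j, φ w₀' j = essValue f w₀' j := fun j => by
    rw [eq_sum_div_card_of_forall_eq (φ w₀') fun k =>
        hETS _ _ _ (hsym₀' _ _ (hsym₀ (fun _ => rfl) k j)),
      eq_sum_div_card_of_forall_eq (essValue f w₀') (j := j) fun k => by
        simp only [essValue, hf₀', hf₀],
      hE, sum_essValue]
  obtain ⟨w₁, hf₁, -⟩ := hc (Function.update (fun _ => c) i (f v i)) fun k => by
    by_cases hk : k = i <;> simp [hk]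
  obtain ⟨w₁', hf₁', hs₁', -⟩ := exists_surplus_eq h3 w₁ (surplus f v)
  have h₁ : φ w₁' i = essValue f w₁' i := hE.apply_eq_essValue_of_forall_ne fun j hj =>
    hIES.apply_eq_essValue_of_surplus_eq (hs₁'.trans hs₀'.symm)
      (by simp [hf₁', hf₀', hf₁, hf₀, hj]) (h₀ j)
  exact hIES.apply_eq_essValue_of_surplus_eq hs₁'.symm (by simp [hf₁', hf₁]) h₁

/-- Theorem 2.1 (ESS part): if `f` is symmetric, rich enough (assumption (2))
and depends only on the proper coalitions (assumption (3)), then a solution `φ`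
satisfies (E), (ETS) and (`f`-IES) iff `φ` is the `f`-ESS value. -/
theorem fESS_characterization [Nonempty N]
    (f : Solution N)
    (h1 : ∀ (v : Game N) (π : Equiv.Perm N) (i : N), f v i = f (permGame π v) (π i))
    (h2 : ∀ v : Game N, ∃ c : ℝ, ∀ x : N → ℝ,
      (∀ i, x i = c ∨ x i = f v i) →
      ∃ w : Game N, (∀ i, f w i = x i) ∧
        ((∀ i, x i = c) → ∀ i j, SymmetricIn w i j))
    (h3 : ∀ v w : Game N,
      (∀ S : Finset N, S ≠ Finset.univ → v.1 S = w.1 S) → ∀ i, f v i = f w i)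
    (φ : Solution N) :
    (Efficient φ ∧ ETS φ ∧ IES f φ) ↔
      (∀ (v : Game N) (i : N),
        φ v i = f v i + (1 / (Fintype.card N : ℝ)) * (v.1 Finset.univ - ∑ k, f v k)) := by
  refine ⟨fun ⟨hE, hETS, hIES⟩ => eq_essValue_of_efficient_of_ets_of_ies h2 h3 hE hETS hIES,
    fun h => ?_⟩
  obtain rfl : φ = essValue f := funext₂ h
  exact ⟨efficient_essValue f, ets_essValue f h1, ies_essValue f⟩

end Stmt13
end

section
/- Characterization of the f-PS value (Theorem 2.1, PS part, due to Funaki–Koriyama): Suppose f ∈ F_+ satisfies: (1) Symmetry: f_i(v) = f_{π(i)}(πv) for every v ∈ V_+, every permutation π of N and every i ∈ N, where πv(πS) = v(S) for all S ⊆ N; (2) for every v ∈ V_+ there exists c ∈ ℝ such that for every x ∈ ℝ^N each of whose components x_i equals either c or f_i(v), there exists w ∈ V_+ with f(w) = x, and moreover if x_i = c for all i ∈ N then w can be chosen with all players pairwise symmetric in w; (3) for all v, w ∈ V_+, if v(S) = w(S) for every proper subset S ⊊ N, then f(v) = f(w). Then a solution φ on V_+ satisfies (E), (ETS), and (f-IER)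 if and only if φ_i(v) = (f_i(v)/Σ_{k∈N} f_k(v))·v(N) for every v ∈ V_+ and i ∈ N. -/
/-!
Write `r(v) = v(N) / Σₖ fₖ(v)`, so that the `f`-PS value is `r(v) fᵢ(v)`. It is efficient, it
satisfies `f`-IER since it depends on `v` only through `r(v)` and `fᵢ(v)`, and it satisfies ETS
because the transposition of two symmetric players fixes `v`, so the anonymity of `f` gives them
equal `f`-values.

Conversely, fix `v`, `i` and `r = r(v)`. Assumption (2) provides a game `u` with `f(u) ≡ c` in which
all players are symmetric, and a game `w` with `fᵢ(w) = fᵢ(v)` and `fⱼ(w) = c` for `j ≠ i`.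
Assumption (3) lets us reset the worth of the grand coalition in `u` and `w` so that both have
ratio `r` without changing `f`. In `u`, (E) and (ETS) give every player `r c`; by `f`-IER so do the
players `j ≠ i` in `w`, so (E) leaves `r fᵢ(v)` to `i` in `w`, and `f`-IER carries this back to `v`.
With a single player, (E) alone already forces the formula.
-/

namespace Stmt14

/-- A TU-game on the player set `N`: a function on coalitions vanishing at `∅`. -/
abbrev Game (N : Type*) := {v : Finset N → ℝ // v ∅ = 0}

variable (N : Type*) [Fintype N] [DecidableEq N]

/-- `V₊`: TU-games whose sum of individual worths is strictly positive. -/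
abbrev GamePos := {v : Game N // 0 < ∑ k, v.1 {k}}

/-- `F₊`: positive solutions, i.e. maps on `V₊` whose payoffs always have a
strictly positive sum. -/
abbrev SolPos := {f : GamePos N → N → ℝ // ∀ v, 0 < ∑ k, f v k}

variable {N}

/-- The game `πv` defined by `πv(πS) = v(S)`, i.e. `πv(T) = v(π⁻¹ T)`. -/
def permGame (π : Equiv.Perm N) (v : Game N) : Game N :=
  ⟨fun S => v.1 (S.image π.symm), by
    show v.1 ((∅ : Finset N).image π.symm) = 0
    rw [Finset.image_empty]
    exact v.2⟩

/-- The game `πv` stays in `V₊`. -/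
def permGamePos (π : Equiv.Perm N) (v : GamePos N) : GamePos N :=
  ⟨permGame π v.1, by
    have h : ∀ k : N, (permGame π v.1).1 {k} = v.1.1 {π.symm k} := by
      intro k
      show v.1.1 (({k} : Finset N).image π.symm) = _
      rw [Finset.image_singleton]
    calc (0 : ℝ) < ∑ k, v.1.1 {k} := v.2
      _ = ∑ k, v.1.1 {π.symm k} := (Equiv.sum_comp π.symm fun k => v.1.1 {k}).symm
      _ = ∑ k, (permGame π v.1).1 {k} := by
          exact Finset.sum_congr rfl fun k _ => (h k).symm⟩

/-- Players `i` and `j` are symmetric in the game `v`. -/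
def SymmetricIn (v : Game N) (i j : N) : Prop :=
  ∀ S : Finset N, i ∉ S → j ∉ S →
    v.1 (insert i S) - v.1 S = v.1 (insert j S) - v.1 S

/-- Efficiency (E) on `V₊`. -/
def Efficient (φ : GamePos N → N → ℝ) : Prop :=
  ∀ v : GamePos N, ∑ i, φ v i = v.1.1 Finset.univ

/-- Equal treatment for a solution (ETS): symmetric players get equal payoffs. -/
def ETS (φ : GamePos N → N → ℝ) : Prop :=
  ∀ (v : GamePos N) (i j : N), SymmetricIn v.1 i j → φ v i = φ v j

/-- The `f`-individualistic property for equal ratio (`f`-IER). -/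
def IER (f : SolPos N) (φ : GamePos N → N → ℝ) : Prop :=
  ∀ (v w : GamePos N) (i : N),
    v.1.1 Finset.univ / (∑ k, f.1 v k) = w.1.1 Finset.univ / (∑ k, f.1 w k) →
    f.1 v i = f.1 w i → φ v i = φ w i


open Finset

section Symmetry

variable {α : Type*} [DecidableEq α] {v : Game α} {i j : α}

theorem SymmetricIn.symm (h : SymmetricIn v i j) : SymmetricIn v j i :=
  fun S hj hi => (h S hi hj).symm

theorem SymmetricIn.apply_insert_eq (h : SymmetricIn v i j) {S : Finset α} (hi : i ∉ S)
    (hj : j ∉ S) : v.1 (insert i S) = v.1 (insert j S) :=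
  sub_left_inj.mp (h S hi hj)

theorem SymmetricIn.apply_image_swap (h : SymmetricIn v i j) (S : Finset α) :
    v.1 (S.image (Equiv.swap i j)) = v.1 S := by
  have key : ∀ a b, SymmetricIn v a b → a ∈ S → b ∉ S →
      v.1 (S.image (Equiv.swap a b)) = v.1 S := by
    intro a b hab ha hb
    have himage : S.image (Equiv.swap a b) = insert b (S.erase a) := by
      ext x; simp only [mem_image, mem_insert, mem_erase]; grind
    rw [himage, ← hab.apply_insert_eq (notMem_erase a S) (fun hb' => hb (mem_of_mem_erase hb')),
      insert_erase ha]
  by_cases hS : i ∈ S ↔ j ∈ S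
  · rw [show S.image (Equiv.swap i j) = S by ext x; simp only [mem_image]; grind]
  by_cases hi : i ∈ S
  · exact key i j h hi (fun hj => hS ⟨fun _ => hj, fun _ => hi⟩)
  · rw [Equiv.swap_comm]
    exact key j i h.symm (by tauto) hi

end Symmetry

theorem permGamePos_swap_of_symmetricIn {v : GamePos N} {i j : N} (h : SymmetricIn v.1 i j) :
    permGamePos (Equiv.swap i j) v = v := by
  refine Subtype.ext (Subtype.ext (funext fun S => ?_))
  show v.1.1 (S.image (Equiv.swap i j).symm) = v.1.1 S
  rw [Equiv.symm_swap]
  exact h.apply_image_swap S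

/-- Assumption (1) of the theorem. -/
def IsAnonymous (g : GamePos N → N → ℝ) : Prop :=
  ∀ (v : GamePos N) (π : Equiv.Perm N) (i : N), g v i = g (permGamePos π v) (π i)

theorem IsAnonymous.apply_eq_of_symmetricIn {g : GamePos N → N → ℝ} (hg : IsAnonymous g)
    {v : GamePos N} {i j : N} (h : SymmetricIn v.1 i j) : g v i = g v j := by
  simpa only [permGamePos_swap_of_symmetricIn h, Equiv.swap_apply_left] using hg v (Equiv.swap i j) i

noncomputable def ratio (f : SolPos N) (v : GamePos N) : ℝ :=
  v.1.1 univ / ∑ k, f.1 v k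

noncomputable def psValue (f : SolPos N) (v : GamePos N) (i : N) : ℝ :=
  ratio f v * f.1 v i

section PSValue

variable {ι : Type*} [Fintype ι] (f : SolPos ι)

theorem psValue_efficient : Efficient (psValue f) := fun v => by
  simp only [psValue, ← mul_sum, ratio, div_mul_cancel₀ _ (f.2 v).ne']

theorem psValue_ier : IER f (psValue f) :=
  fun _ _ _ hr hf => congrArg₂ (· * ·) hr hf

end PSValue

theorem psValue_ets {f : SolPos N} (hf : IsAnonymous f.1) : ETS (psValue f) :=
  fun _ _ _ h => congrArg₂ (· * ·) rfl (hf.apply_eq_of_symmetricIn h)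

section Uniqueness

variable {f : SolPos N} {φ : GamePos N → N → ℝ}

theorem Efficient.eq_psValue_of_forall_ne (hE : Efficient φ) {v : GamePos N} {i : N}
    (h : ∀ j ≠ i, φ v j = psValue f v j) : φ v i = psValue f v i := by
  have hsum : ∑ j, φ v j = ∑ j, psValue f v j := (hE v).trans (psValue_efficient f v).symm
  rw [← add_sum_erase _ _ (mem_univ i), ← add_sum_erase _ _ (mem_univ i),
    sum_congr rfl fun j hj => h j (ne_of_mem_erase hj)] at hsum
  linarith

theorem Efficient.eq_psValue_of_forall_symmetricIn (hE : Efficient φ) (hT : ETS φ)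
    {v : GamePos N} (hv : ∀ i j, SymmetricIn v.1 i j) {c : ℝ} (hc : ∀ j, f.1 v j = c) (i : N) :
    φ v i = psValue f v i := by
  have : Nonempty N := ⟨i⟩
  have hn : (Fintype.card N : ℝ) ≠ 0 := Nat.cast_ne_zero.mpr Fintype.card_ne_zero
  have hφ : (Fintype.card N : ℝ) * φ v i = v.1.1 univ := by
    rw [← hE v, sum_congr rfl fun j _ => hT v j i (hv j i), sum_const, card_univ, nsmul_eq_mul]
  have hf : ∑ k, f.1 v k = Fintype.card N * c := by
    rw [sum_congr rfl fun j _ => hc j, sum_const, card_univ, nsmul_eq_mul]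
  have hc0 : c ≠ 0 := by
    rintro rfl
    exact (f.2 v).ne' (by simpa using hf)
  rw [psValue, ratio, hf, hc, ← hφ]
  field_simp

end Uniqueness

section GrandCoalition

variable [Nontrivial N]

def updateGrand (v : GamePos N) (t : ℝ) : GamePos N :=
  ⟨⟨fun S => if S = univ then t else v.1.1 S, by simp [v.1.2, univ_nonempty.ne_empty.symm]⟩,
    by simpa [singleton_ne_univ] using v.2⟩

theorem updateGrand_apply_of_ne (v : GamePos N) (t : ℝ) {S : Finset N} (hS : S ≠ univ) :
    (updateGrand v t).1.1 S = v.1.1 S :=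
  if_neg hS

theorem updateGrand_univ (v : GamePos N) (t : ℝ) : (updateGrand v t).1.1 univ = t :=
  if_pos rfl

theorem SymmetricIn.updateGrand {v : GamePos N} {i j : N} (h : SymmetricIn v.1 i j) (t : ℝ) :
    SymmetricIn (updateGrand v t).1 i j := by
  intro S hi hj
  rcases eq_or_ne i j with rfl | hij
  · rfl
  have ne_univ : ∀ {T : Finset N} {a : N}, a ∉ T → T ≠ univ := fun ha hT => ha (hT ▸ mem_univ _)
  rw [updateGrand_apply_of_ne _ _ (ne_univ hi),
    updateGrand_apply_of_ne _ _ (ne_univ (a := j) (by simp [hij.symm, hj])),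
    updateGrand_apply_of_ne _ _ (ne_univ (a := i) (by simp [hij, hi]))]
  exact h S hi hj

end GrandCoalition

/-- Assumption (3) of the theorem. -/
def DependsOnProperCoalitions (f : SolPos N) : Prop :=
  ∀ v w : GamePos N, (∀ S : Finset N, S ≠ univ → v.1.1 S = w.1.1 S) → ∀ i, f.1 v i = f.1 w i

theorem DependsOnProperCoalitions.apply_updateGrand [Nontrivial N] {f : SolPos N}
    (hf : DependsOnProperCoalitions f) (v : GamePos N) (t : ℝ) : f.1 (updateGrand v t) = f.1 v :=
  funext (hf _ v fun _ hS => updateGrand_apply_of_ne v t hS)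

theorem DependsOnProperCoalitions.ratio_updateGrand [Nontrivial N] {f : SolPos N}
    (hf : DependsOnProperCoalitions f) (v : GamePos N) (r : ℝ) :
    ratio f (updateGrand v (r * ∑ k, f.1 v k)) = r := by
  rw [ratio, hf.apply_updateGrand, updateGrand_univ, mul_div_cancel_right₀ _ (f.2 v).ne']

theorem eq_psValue_of_efficient_of_ets_of_ier {f : SolPos N}
    (h2 : ∀ v : GamePos N, ∃ c : ℝ, ∀ x : N → ℝ,
      (∀ i, x i = c ∨ x i = f.1 v i) →
      ∃ w : GamePos N, (∀ i, f.1 w i = x i) ∧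
        ((∀ i, x i = c) → ∀ i j, SymmetricIn w.1 i j))
    (h3 : DependsOnProperCoalitions f) {φ : GamePos N → N → ℝ}
    (hE : Efficient φ) (hT : ETS φ) (hR : IER f φ) (v : GamePos N) (i : N) :
    φ v i = psValue f v i := by
  rcases subsingleton_or_nontrivial N with hN | hN
  · exact hE.eq_psValue_of_forall_ne fun j hj => absurd (Subsingleton.elim j i) hj
  obtain ⟨c, hc⟩ := h2 v
  obtain ⟨u, hu, hu_symm⟩ := hc (fun _ => c) fun _ => Or.inl rfl
  obtain ⟨w, hw, -⟩ := hc (Function.update (fun _ => c) i (f.1 v i)) fun j => by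
    rcases eq_or_ne j i with rfl | hj
    · simp
    · simp [hj]
  set r := ratio f v
  set u' := updateGrand u (r * ∑ k, f.1 u k)
  set w' := updateGrand w (r * ∑ k, f.1 w k)
  have hu'f : f.1 u' = f.1 u := h3.apply_updateGrand u _
  have hw'f : f.1 w' = f.1 w := h3.apply_updateGrand w _
  have hu'r : ratio f u' = r := h3.ratio_updateGrand u r
  have hw'r : ratio f w' = r := h3.ratio_updateGrand w r
  have hφu' : ∀ j, φ u' j = psValue f u' j :=
    hE.eq_psValue_of_forall_symmetricIn hT (fun a b => (hu_symm (fun _ => rfl) a b).updateGrand _)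
      (c := c) (by simp [hu'f, hu])
  have hφw' : φ w' i = psValue f w' i := hE.eq_psValue_of_forall_ne fun j hj => by
    rw [hR w' u' j (hw'r.trans hu'r.symm) (by simp [hw'f, hu'f, hw, hu, hj]), hφu']
    simp [psValue, hu'r, hw'r, hu'f, hw'f, hu, hw, hj]
  calc φ v i = φ w' i := hR v w' i hw'r.symm (by simp [hw'f, hw])
    _ = psValue f w' i := hφw'
    _ = psValue f v i := by simp [psValue, hw'r, hw'f, hw, r]

theorem fPS_characterization_general
    (f : SolPos N)
    (h1 : ∀ (v : GamePos N) (π : Equiv.Perm N) (i : N),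
      f.1 v i = f.1 (permGamePos π v) (π i))
    (h2 : ∀ v : GamePos N, ∃ c : ℝ, ∀ x : N → ℝ,
      (∀ i, x i = c ∨ x i = f.1 v i) →
      ∃ w : GamePos N, (∀ i, f.1 w i = x i) ∧
        ((∀ i, x i = c) → ∀ i j, SymmetricIn w.1 i j))
    (h3 : ∀ v w : GamePos N,
      (∀ S : Finset N, S ≠ Finset.univ → v.1.1 S = w.1.1 S) → ∀ i, f.1 v i = f.1 w i)
    (φ : GamePos N → N → ℝ) :
    (Efficient φ ∧ ETS φ ∧ IER f φ) ↔
      (∀ (v : GamePos N) (i : N),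
        φ v i = (f.1 v i / ∑ k, f.1 v k) * v.1.1 Finset.univ) := by
  have hPS : ∀ v i, (f.1 v i / ∑ k, f.1 v k) * v.1.1 univ = psValue f v i := fun v i =>
    div_mul_comm _ _ _
  simp only [hPS]
  constructor
  · rintro ⟨hE, hT, hR⟩
    exact eq_psValue_of_efficient_of_ets_of_ier h2 h3 hE hT hR
  · intro h
    obtain rfl : φ = psValue f := funext₂ h
    exact ⟨psValue_efficient f, psValue_ets h1, psValue_ier f⟩

/-- Theorem 2.1 (PS part): if `f ∈ F₊` is symmetric, rich enough (assumption
(2)) and depends only on the proper coalitions (assumption (3)), then a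
solution `φ` on `V₊` satisfies (E), (ETS) and (`f`-IER) iff `φ` is the `f`-PS
value. -/
theorem fPS_characterization [Nonempty N]
    (f : SolPos N)
    (h1 : ∀ (v : GamePos N) (π : Equiv.Perm N) (i : N),
      f.1 v i = f.1 (permGamePos π v) (π i))
    (h2 : ∀ v : GamePos N, ∃ c : ℝ, ∀ x : N → ℝ,
      (∀ i, x i = c ∨ x i = f.1 v i) →
      ∃ w : GamePos N, (∀ i, f.1 w i = x i) ∧
        ((∀ i, x i = c) → ∀ i j, SymmetricIn w.1 i j))
    (h3 : ∀ v w : GamePos N,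
      (∀ S : Finset N, S ≠ Finset.univ → v.1.1 S = w.1.1 S) → ∀ i, f.1 v i = f.1 w i)
    (φ : GamePos N → N → ℝ) :
    (Efficient φ ∧ ETS φ ∧ IER f φ) ↔
      (∀ (v : GamePos N) (i : N),
        φ v i = (f.1 v i / ∑ k, f.1 v k) * v.1.1 Finset.univ) :=
  fPS_characterization_general f h1 h2 h3 φ

end Stmt14
end
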